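/- arXiv:2111.04921 — 9 statements merged into one kernel-verified Lean document; each statement's English description precedes it below -/
import Mathlib

section
/- Let K be a nonempty locally compact Hausdorff space and X a Banach space. If C_0(K, X) has the ball-covering property, then X has the ball-covering property. -/
open Metric ZeroAtInfty
open scoped ENNReal

/-- A normed space has the ball-covering property (BCP) if there is a countable family of
closed balls, none containing the origin (`0 < r n < ‖c n‖`), covering the unit sphere. -/
def HasBCP (X : Type*) [NormedAddCommGroup X] : Prop :=
  ∃ (c : ℕ → X) (r : ℕ → ℝ),
    (∀ n, 0 < r n ∧ r n < ‖c n‖) ∧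
    sphere (0 : X) 1 ⊆ ⋃ n, closedBall (c n) (r n)

/-- The strong ball-covering property: the radii are uniformly bounded above. -/
def HasSBCP (X : Type*) [NormedAddCommGroup X] : Prop :=
  ∃ (c : ℕ → X) (r : ℕ → ℝ),
    (∀ n, 0 < r n ∧ r n < ‖c n‖) ∧
    (∃ M : ℝ, ∀ n, r n ≤ M) ∧
    sphere (0 : X) 1 ⊆ ⋃ n, closedBall (c n) (r n)

/-- The uniform ball-covering property: strong BCP together with a closed ball around the
origin disjoint from all the balls of the covering. -/
def HasUBCP (X : Type*) [NormedAddCommGroup X] : Prop :=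
  ∃ (c : ℕ → X) (r : ℕ → ℝ),
    (∀ n, 0 < r n ∧ r n < ‖c n‖) ∧
    (∃ M : ℝ, ∀ n, r n ≤ M) ∧
    (∃ ρ : ℝ, 0 < ρ ∧ ∀ n, Disjoint (closedBall (0 : X) ρ) (closedBall (c n) (r n))) ∧
    sphere (0 : X) 1 ⊆ ⋃ n, closedBall (c n) (r n)

/-- A topological space has a countable π-basis if there is a countable family of nonempty
open sets such that every nonempty open set contains a member of the family. -/
def HasCountablePiBasis (K : Type*) [TopologicalSpace K] : Prop :=
  ∃ B : Set (Set K), B.Countable ∧ (∀ U ∈ B, IsOpen U ∧ U.Nonempty) ∧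
    ∀ V : Set K, IsOpen V → V.Nonempty → ∃ U ∈ B, U ⊆ V

theorem bcp_of_bcp_C0 (K : Type*) [TopologicalSpace K]
    [LocallyCompactSpace K] [T2Space K] [Nonempty K]
    (X : Type*) [NormedAddCommGroup X] [NormedSpace ℝ X] [CompleteSpace X]
    (h : HasBCP C₀(K, X)) : HasBCP X := by
  classical
  obtain ⟨f, r, hfr, hcov⟩ := h
  -- a unit vector in X (X is nontrivial since ‖f 0‖ > r 0 > 0)
  have hf0 : f 0 ≠ 0 := by
    intro h0
    have := (hfr 0).2
    rw [h0, norm_zero] at this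
    exact absurd ((hfr 0).1.trans this) (lt_irrefl 0)
  obtain ⟨k', hk'⟩ : ∃ k, f 0 k ≠ 0 := by
    by_contra hc
    push_neg at hc
    exact hf0 (ZeroAtInftyContinuousMap.ext fun k => hc k)
  set u : X := ‖f 0 k'‖⁻¹ • f 0 k' with hu
  have hnu : ‖u‖ = 1 := by
    rw [hu, norm_smul, norm_inv, norm_norm,
      inv_mul_cancel₀ (norm_ne_zero_iff.mpr hk')]
  -- a bump function
  obtain ⟨k₀⟩ : Nonempty K := inferInstance
  obtain ⟨φ, hφ1, -, hφc, hφ01⟩ :=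
    exists_continuous_one_zero_of_isCompact (isCompact_singleton (x := k₀))
      isClosed_empty (Set.disjoint_empty _)
  -- pointwise norm bound in C₀
  have key : ∀ (g : C₀(K, X)) (k : K), ‖g k‖ ≤ ‖g‖ := by
    intro g k
    have := BoundedContinuousFunction.norm_coe_le_norm g.toBCF k
    rwa [ZeroAtInftyContinuousMap.norm_toBCF_eq_norm] at this
  have normle : ∀ (g : C₀(K, X)) (C : ℝ), 0 ≤ C → (∀ k, ‖g k‖ ≤ C) → ‖g‖ ≤ C := by
    intro g C hC hk
    rw [← ZeroAtInftyContinuousMap.norm_toBCF_eq_norm]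
    exact (BoundedContinuousFunction.norm_le hC).mpr hk
  -- choice of good points
  set P : ℕ → Prop := fun n => ∃ k, r n < ‖f n k‖ ∧ 0 < φ k with hP
  set c : ℕ → X := fun n =>
    if hn : P n then (φ hn.choose)⁻¹ • f n hn.choose else u with hc
  set ρ : ℕ → ℝ := fun n => if hn : P n then (φ hn.choose)⁻¹ * r n else 1/2 with hρ
  refine ⟨c, ρ, fun n => ?_, fun x hx => ?_⟩
  · by_cases hn : P n
    · obtain ⟨hk1, hk2⟩ := hn.choose_spec
      have hinv : 0 < (φ hn.choose)⁻¹ := inv_pos.mpr hk2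
      constructor
      · simp only [hρ, dif_pos hn]
        exact mul_pos hinv (hfr n).1
      · simp only [hρ, hc, dif_pos hn, norm_smul, norm_inv, Real.norm_eq_abs,
          abs_of_pos hk2]
        exact (mul_lt_mul_iff_right₀ hinv).mpr hk1
    · simp only [hρ, hc, dif_neg hn, hnu]
      norm_num
  · -- covering
    have hx1 : ‖x‖ = 1 := by simpa using hx
    -- the test function g = φ • x
    set g : C₀(K, X) := ⟨⟨fun k => φ k • x, (map_continuous φ).smul continuous_const⟩,
      by
        have : HasCompactSupport (fun k => φ k • x) := hφc.smul_right
        exact this.is_zero_at_infty⟩ with hg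
    have hgapp : ∀ k, g k = φ k • x := fun k => rfl
    have hgnorm : ‖g‖ = 1 := by
      apply le_antisymm
      · refine normle g 1 zero_le_one fun k => ?_
        rw [hgapp, norm_smul, Real.norm_eq_abs, abs_of_nonneg (hφ01 k).1, hx1, mul_one]
        exact (hφ01 k).2
      · have := key g k₀
        rwa [hgapp, hφ1 (Set.mem_singleton k₀), Pi.one_apply, one_smul, hx1] at this
    have hgs : g ∈ sphere (0 : C₀(K, X)) 1 := by
      simp [mem_sphere_iff_norm, hgnorm]
    obtain ⟨s, ⟨n, rfl⟩, hns⟩ := hcov hgs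
    have hdist : ‖g - f n‖ ≤ r n := by
      rw [mem_closedBall, dist_eq_norm] at hns
      exact hns
    have hpt : ∀ k, ‖φ k • x - f n k‖ ≤ r n := by
      intro k
      have := key (g - f n) k
      simpa [hgapp] using this.trans hdist
    -- P n holds
    have hPn : P n := by
      obtain ⟨k, hk⟩ : ∃ k, r n < ‖f n k‖ := by
        by_contra hcon
        push_neg at hcon
        exact absurd (normle (f n) (r n) (hfr n).1.le hcon) (not_le.mpr (hfr n).2)
      refine ⟨k, hk, ?_⟩
      by_contra hφk
      push_neg at hφk
      have hφk0 : φ k = 0 := le_antisymm hφk (hφ01 k).1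
      have := hpt k
      rw [hφk0, zero_smul, zero_sub, norm_neg] at this
      exact absurd (lt_of_lt_of_le hk this) (lt_irrefl _)
    obtain ⟨hk1, hk2⟩ := hPn.choose_spec
    set k := hPn.choose
    have hball : ‖x - (φ k)⁻¹ • f n k‖ ≤ (φ k)⁻¹ * r n := by
      have h1 : ‖x - (φ k)⁻¹ • f n k‖ = (φ k)⁻¹ * ‖φ k • x - f n k‖ := by
        rw [← norm_smul_of_nonneg (inv_pos.mpr hk2).le, smul_sub, smul_smul,
          inv_mul_cancel₀ (ne_of_gt hk2), one_smul]
      rw [h1]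
      exact mul_le_mul_of_nonneg_left (hpt k) (inv_pos.mpr hk2).le
    refine Set.mem_iUnion.mpr ⟨n, ?_⟩
    rw [mem_closedBall, dist_eq_norm]
    simpa only [hc, hρ, dif_pos hPn] using hball
end

section
/- Let K be a locally compact Hausdorff space and X a nonzero Banach space. If C_0(K, X) has the ball-covering property, then C_0(K) has the ball-covering property. -/
open Metric ZeroAtInfty
open scoped ENNReal

section Aux

variable {K : Type*} [TopologicalSpace K] {Y : Type*} [NormedAddCommGroup Y]

lemma my_c0_norm_le (f : C₀(K, Y)) {C : ℝ} (hC : 0 ≤ C) (h : ∀ k, ‖f k‖ ≤ C) : ‖f‖ ≤ C := by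
  rw [← ZeroAtInftyContinuousMap.norm_toBCF_eq_norm]
  exact (BoundedContinuousFunction.norm_le hC).mpr h

lemma my_c0_le_norm (f : C₀(K, Y)) (k : K) : ‖f k‖ ≤ ‖f‖ := by
  rw [← ZeroAtInftyContinuousMap.norm_toBCF_eq_norm]
  exact f.toBCF.norm_coe_le_norm k

end Aux

theorem bcp_scalar_of_bcp_C0 (K : Type*) [TopologicalSpace K]
    [LocallyCompactSpace K] [T2Space K]
    (X : Type*) [NormedAddCommGroup X] [NormedSpace ℝ X] [CompleteSpace X] [Nontrivial X]
    (h : HasBCP C₀(K, X)) : HasBCP C₀(K, ℝ) := by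
  obtain ⟨c, r, hcr, hcov⟩ := h
  -- a unit vector in X
  obtain ⟨x0, hx0⟩ := exists_ne (0 : X)
  set e : X := ‖x0‖⁻¹ • x0 with he
  have he1 : ‖e‖ = 1 := by
    rw [he, norm_smul, norm_inv, norm_norm, inv_mul_cancel₀ (norm_ne_zero_iff.mpr hx0)]
  -- the open sets U n
  set U : ℕ → Set K := fun n => {k | r n < ‖c n k‖} with hU
  have hUopen : ∀ n, IsOpen (U n) := by
    intro n
    have : Continuous fun k => ‖c n k‖ := (map_continuous (c n)).norm
    exact isOpen_lt continuous_const this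
  have hUne : ∀ n, ∃ k, k ∈ U n := by
    intro n
    by_contra hc
    push_neg at hc
    have : ‖c n‖ ≤ r n := my_c0_norm_le _ (hcr n).1.le fun k => le_of_not_gt (hc k)
    exact absurd (hcr n).2 (not_lt.mpr this)
  choose kp hkp using hUne
  -- bump functions
  have hbump : ∀ n, ∃ φ : C(K, ℝ), Set.EqOn φ 1 {kp n} ∧ Set.EqOn φ 0 (U n)ᶜ ∧
      HasCompactSupport φ ∧ ∀ x, φ x ∈ Set.Icc (0 : ℝ) 1 := by
    intro n
    exact exists_continuous_one_zero_of_isCompact isCompact_singleton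
      (hUopen n).isClosed_compl (by simpa using hkp n)
  choose φ hφ1 hφ0 hφcs hφmem using hbump
  set φC : ℕ → C₀(K, ℝ) := fun n => ⟨φ n, (hφcs n).is_zero_at_infty⟩ with hφC
  have hφC_apply : ∀ n k, φC n k = φ n k := fun n k => rfl
  have hφC_norm : ∀ n, ‖φC n‖ = 1 := by
    intro n
    refine le_antisymm (my_c0_norm_le _ zero_le_one fun k => ?_) ?_
    · rw [hφC_apply, Real.norm_eq_abs, abs_le]
      exact ⟨by linarith [(hφmem n k).1], (hφmem n k).2⟩
    · have := my_c0_le_norm (φC n) (kp n)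
      rw [hφC_apply, hφ1 n (Set.mem_singleton _)] at this
      simpa using this
  -- pointwise values bounded by the sup norm, in X-valued case
  -- the π-basis property
  have hpi : ∀ V : Set K, IsOpen V → V.Nonempty → ∃ n, U n ⊆ V := by
    intro V hVopen ⟨k0, hk0⟩
    obtain ⟨ψ, hψ1, hψ0, hψcs, hψmem⟩ := exists_continuous_one_zero_of_isCompact
      (isCompact_singleton (x := k0)) hVopen.isClosed_compl (by simpa using hk0)
    have hgc : Continuous fun k => ψ k • e := (map_continuous ψ).smul continuous_const
    have hgcs : HasCompactSupport fun k => ψ k • e := by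
      apply HasCompactSupport.mono hψcs
      intro k hk
      simp only [Function.mem_support] at hk ⊢
      intro hzero
      exact hk (by rw [hzero, zero_smul])
    set g : C₀(K, X) := ⟨⟨fun k => ψ k • e, hgc⟩, hgcs.is_zero_at_infty⟩ with hg
    have hg_apply : ∀ k, g k = ψ k • e := fun k => rfl
    have hgnorm : ‖g‖ = 1 := by
      refine le_antisymm (my_c0_norm_le _ zero_le_one fun k => ?_) ?_
      · rw [hg_apply, norm_smul, he1, mul_one, Real.norm_eq_abs, abs_le]
        exact ⟨by linarith [(hψmem k).1], (hψmem k).2⟩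
      · have := my_c0_le_norm g k0
        rw [hg_apply, hψ1 (Set.mem_singleton _)] at this
        simpa [he1] using this
    have hgs : g ∈ sphere (0 : C₀(K, X)) 1 := by
      simpa [mem_sphere_iff_norm] using hgnorm
    obtain ⟨_, ⟨n, rfl⟩, hn⟩ := hcov hgs
    refine ⟨n, fun k hk => ?_⟩
    by_contra hkV
    have hgk : g k = 0 := by
      rw [hg_apply, hψ0 hkV]; simp
    have h1 : ‖c n k‖ ≤ r n := by
      have h2 : ‖(g - c n) k‖ ≤ ‖g - c n‖ := my_c0_le_norm _ k
      have h3 : ‖g - c n‖ ≤ r n := by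
        rwa [mem_closedBall, dist_eq_norm] at hn
      have h4 : (g - c n) k = -(c n k) := by
        simp [ZeroAtInftyContinuousMap.coe_sub, hgk]
      rw [h4, norm_neg] at h2
      linarith
    exact absurd hk (not_lt.mpr h1).elim
  -- construct the covering of the sphere of C₀(K, ℝ)
  refine ⟨fun m => (if Even m then (2 : ℝ) else -2) • φC (m / 2), fun _ => 3 / 2, ?_, ?_⟩
  · intro m
    refine ⟨by norm_num, ?_⟩
    show (3:ℝ)/2 < ‖(if Even m then (2:ℝ) else -2) • φC (m / 2)‖
    have hns := norm_smul (if Even m then (2:ℝ) else -2) (φC (m / 2))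
    rw [hns, hφC_norm, mul_one]
    by_cases hm : Even m <;> simp [hm] <;> norm_num
  · intro g hgs
    have hgnorm : ‖g‖ = 1 := by simpa [mem_sphere_iff_norm] using hgs
    have hkey : ∃ k, (3 : ℝ) / 4 < |g k| := by
      by_contra hc
      push_neg at hc
      have : ‖g‖ ≤ 3 / 4 := my_c0_norm_le _ (by norm_num) fun k => by
        simpa [Real.norm_eq_abs] using hc k
      rw [hgnorm] at this; norm_num at this
    obtain ⟨k, hk⟩ := hkey
    have hgb : ∀ t, |g t| ≤ 1 := fun t => by
      have := my_c0_le_norm g t; rwa [hgnorm, Real.norm_eq_abs] at this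
    rcases lt_abs.mp hk with hpos | hneg
    · -- g k > 3/4
      obtain ⟨n, hn⟩ := hpi {t | 3 / 4 < g t}
        (isOpen_lt continuous_const (map_continuous g)) ⟨k, hpos⟩
      refine Set.mem_iUnion.mpr ⟨2 * n, ?_⟩
      have hEven : Even (2 * n) := even_two_mul n
      have hdiv : 2 * n / 2 = n := by omega
      rw [mem_closedBall, dist_eq_norm]
      simp only [hEven, if_pos, hdiv]
      refine my_c0_norm_le _ (by norm_num) fun t => ?_
      have happ : (g - (2 : ℝ) • φC n) t = g t - 2 * φ n t := by
        simp [hφC_apply]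
      rw [happ, Real.norm_eq_abs, abs_le]
      by_cases ht : φ n t = 0
      · rw [ht]; constructor <;> [linarith [(abs_le.mp (hgb t)).1]; linarith [(abs_le.mp (hgb t)).2]]
      · have htU : t ∈ U n := by
          by_contra htU
          exact ht (hφ0 n htU)
        have hgt : 3 / 4 < g t := hn htU
        have h1 := (hφmem n t).1
        have h2 := (hφmem n t).2
        have h3 := (abs_le.mp (hgb t)).2
        constructor <;> linarith
    · -- g k < -3/4, i.e. 3/4 < -(g k)
      obtain ⟨n, hn⟩ := hpi {t | g t < -(3 / 4)}
        (isOpen_lt (map_continuous g) continuous_const) ⟨k, show g k < -(3/4) by linarith⟩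
      refine Set.mem_iUnion.mpr ⟨2 * n + 1, ?_⟩
      have hOdd : ¬ Even (2 * n + 1) := by simp [parity_simps]
      have hdiv : (2 * n + 1) / 2 = n := by omega
      rw [mem_closedBall, dist_eq_norm]
      simp only [hOdd, if_neg, hdiv, not_false_iff]
      refine my_c0_norm_le _ (by norm_num) fun t => ?_
      have happ : (g - (-2 : ℝ) • φC n) t = g t + 2 * φ n t := by
        simp [hφC_apply]; try ring
      rw [happ, Real.norm_eq_abs, abs_le]
      by_cases ht : φ n t = 0
      · rw [ht]; constructor <;> [linarith [(abs_le.mp (hgb t)).1]; linarith [(abs_le.mp (hgb t)).2]]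
      · have htU : t ∈ U n := by
          by_contra htU
          exact ht (hφ0 n htU)
        have hgt : g t < -(3 / 4) := hn htU
        have h1 := (hφmem n t).1
        have h2 := (hφmem n t).2
        have h3 := (abs_le.mp (hgb t)).1
        constructor <;> linarith
end

section
/- Let L = {0,1}^ℝ with the product topology and let (h_n) be a sequence that is dense in L. Then the set K = (L × {0}) ∪ { (h_n, 1/n) : n ∈ ℕ }, as a subspace of L × ℝ, is compact, each point (h_n, 1/n) is isolated in K, and the singletons {(h_n, 1/n)} form a countable π-basis for K. -/
open Metric ZeroAtInfty
open scoped ENNReal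

/-!
The points `(h n, 1 / n)` accumulate at every point `(y, 0)` of the base: a dense sequence in the
perfect T1 space `{0,1}^ℝ` visits every nonempty open set infinitely often, so it visits it at
indices `n` with `1 / n` as small as we like. Hence they form a π-basis. Each of them is isolated
because `1 / n` is isolated in `{0} ∪ {1 / m}`, and the same fact shows that `K` is closed in
the compact space `{0,1}^ℝ × ({0} ∪ {1 / m})`, hence compact.
-/

open Set Filter Topology

instance Pi.perfectSpace {ι : Type*} [Infinite ι] {Y : ι → Type*}
    [∀ i, TopologicalSpace (Y i)] [∀ i, Nontrivial (Y i)] : PerfectSpace (∀ i, Y i) := by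
  classical
  refine ⟨preperfect_iff_nhds.2 fun x _ U hU => ?_⟩
  rw [nhds_pi, Filter.mem_pi] at hU
  obtain ⟨I, hI, t, ht, hIt⟩ := hU
  obtain ⟨i, hi⟩ := hI.infinite_compl.nonempty
  obtain ⟨y, hy⟩ := exists_ne (x i)
  refine ⟨Function.update x i y, ⟨hIt fun j hj => ?_, mem_univ _⟩, fun h => hy ?_⟩
  · rw [Function.update_of_ne (ne_of_mem_of_not_mem hj hi)]
    exact mem_of_mem_nhds (ht j)
  · simpa using congrFun h i

theorem DenseRange.mapClusterPt_atTop {X : Type*} [TopologicalSpace X] [T1Space X]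
    [PerfectSpace X] {u : ℕ → X} (hu : DenseRange u) (x : X) : MapClusterPt x atTop u := by
  refine mapClusterPt_iff_frequently.2 fun U hU => frequently_atTop.2 fun N => ?_
  have hdense : Dense (range u \ u '' Iio N) := hu.sdiff_finite ((finite_Iio N).image u)
  obtain ⟨-, hxU, ⟨n, rfl⟩, hnN⟩ := mem_closure_iff_nhds.1 (hdense x) U hU
  exact ⟨n, not_lt.1 fun hn => hnN ⟨n, hn, rfl⟩, hxU⟩

theorem exists_isOpen_one_div_natCast_mem_iff {n : ℕ} (hn : 0 < n) :
    ∃ O : Set ℝ, IsOpen O ∧ ∀ m : ℕ, (1 / m : ℝ) ∈ O ↔ m = n := by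
  refine ⟨{0}ᶜ ∩ Inv.inv ⁻¹' Ioo (n - 1 / 2) (n + 1 / 2),
    continuousOn_inv₀.isOpen_inter_preimage isOpen_compl_singleton isOpen_Ioo, fun m => ?_⟩
  rcases m.eq_zero_or_pos with rfl | hm
  · simp [hn.ne]
  · simp only [one_div, mem_inter_iff, mem_compl_iff, mem_singleton_iff, inv_eq_zero,
      Nat.cast_eq_zero, hm.ne', not_false_eq_true, mem_preimage, inv_inv, mem_Ioo, true_and]
    constructor
    · rintro ⟨h1, h2⟩
      have : m < n + 1 := by exact_mod_cast (by linarith : (m : ℝ) < n + 1)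
      have : n < m + 1 := by exact_mod_cast (by linarith : (n : ℝ) < m + 1)
      omega
    · rintro rfl
      constructor <;> linarith

section GraphWithBase

variable {X : Type*} (u : ℕ → X)

def seqGraph : Set (X × ℝ) := {p | ∃ n : ℕ, 0 < n ∧ p = (u n, 1 / (n : ℝ))}

def graphWithBase : Set (X × ℝ) := {p | p.2 = 0} ∪ seqGraph u

variable {u}

theorem prod_inter_graphWithBase_eq_singleton {n : ℕ} (hn : 0 < n) {O : Set ℝ}
    (hO : ∀ m : ℕ, (1 / m : ℝ) ∈ O ↔ m = n) :
    (univ ×ˢ O) ∩ graphWithBase u = {(u n, 1 / (n : ℝ))} := by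
  -- `0 ∉ O` is the case `m = 0` of `hO`, since `1 / 0 = 0` in `ℝ`
  have h0 : (0 : ℝ) ∉ O := by simpa [hn.ne] using hO 0
  ext ⟨x, t⟩
  simp only [mem_inter_iff, mem_prod, mem_univ, true_and, mem_singleton_iff, Prod.mk.injEq]
  constructor
  · rintro ⟨htO, rfl | ⟨m, -, hm⟩⟩
    · exact absurd htO h0
    · obtain ⟨rfl, rfl⟩ := Prod.mk.inj hm
      obtain rfl := (hO m).1 htO
      exact ⟨rfl, rfl⟩
  · rintro ⟨rfl, rfl⟩
    exact ⟨(hO n).2 rfl, Or.inr ⟨n, hn, rfl⟩⟩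

theorem graphWithBase_subset_prod :
    graphWithBase u ⊆ univ ×ˢ insert 0 (range fun n : ℕ => 1 / (n : ℝ)) := by
  rintro p (hp | ⟨n, -, rfl⟩)
  · exact ⟨trivial, Or.inl hp⟩
  · exact ⟨trivial, Or.inr ⟨n, rfl⟩⟩

variable [TopologicalSpace X]

theorem isClosed_graphWithBase [T1Space X] : IsClosed (graphWithBase u) := by
  refine isClosed_of_closure_subset fun p hp => ?_
  have hT : IsClosed (insert 0 (range fun n : ℕ => 1 / (n : ℝ))) :=
    tendsto_one_div_atTop_nhds_zero_nat.isCompact_insert_range.isClosed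
  obtain h0 | ⟨n, hn : 1 / (n : ℝ) = p.2⟩ :=
    (mapsTo_snd_prod.comp graphWithBase_subset_prod).closure_left continuous_snd hT hp
  · exact Or.inl h0
  rcases n.eq_zero_or_pos with rfl | hn0
  · exact Or.inl (by simpa using hn.symm)
  obtain ⟨O, hO, hOn⟩ := exists_isOpen_one_div_natCast_mem_iff hn0
  have hpO : p ∈ univ ×ˢ O := ⟨trivial, hn ▸ (hOn n).2 rfl⟩
  have hp_eq := (isOpen_univ.prod hO).inter_closure ⟨hpO, hp⟩
  rw [prod_inter_graphWithBase_eq_singleton hn0 hOn, closure_singleton,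
    mem_singleton_iff] at hp_eq
  exact hp_eq ▸ Or.inr ⟨n, hn0, rfl⟩

theorem isCompact_graphWithBase [CompactSpace X] [T1Space X] : IsCompact (graphWithBase u) :=
  (isCompact_univ.prod tendsto_one_div_atTop_nhds_zero_nat.isCompact_insert_range)
    |>.of_isClosed_subset isClosed_graphWithBase graphWithBase_subset_prod

theorem isOpen_singleton_of_mem_seqGraph {x : graphWithBase u}
    (hx : (x : X × ℝ) ∈ seqGraph u) : IsOpen ({x} : Set (graphWithBase u)) := by
  obtain ⟨n, hn, hxn⟩ := hx
  obtain ⟨O, hO, hOn⟩ := exists_isOpen_one_div_natCast_mem_iff hn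
  refine isOpen_induced_iff.2 ⟨univ ×ˢ O, isOpen_univ.prod hO, ?_⟩
  ext y
  rw [mem_preimage, mem_singleton_iff, ← Subtype.coe_inj, hxn, ← mem_singleton_iff,
    ← prod_inter_graphWithBase_eq_singleton hn hOn]
  exact (and_iff_left y.2).symm

theorem mem_closure_seqGraph_of_mapClusterPt {x : X} (hx : MapClusterPt x atTop u) :
    (x, (0 : ℝ)) ∈ closure (seqGraph u) := by
  rw [mem_closure_iff_nhds, nhds_prod_eq]
  intro W hW
  obtain ⟨U, hU, V, hV, hUV⟩ := mem_prod_iff.1 hW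
  have hsmall : ∀ᶠ n : ℕ in atTop, 0 < n ∧ 1 / (n : ℝ) ∈ V :=
    (eventually_gt_atTop 0).and (tendsto_one_div_atTop_nhds_zero_nat hV)
  obtain ⟨n, hnU, hn, hnV⟩ :=
    ((mapClusterPt_iff_frequently.1 hx U hU).and_eventually hsmall).exists
  exact ⟨_, hUV ⟨hnU, hnV⟩, n, hn, rfl⟩

theorem exists_singleton_subset_of_isOpen (hu : ∀ x, MapClusterPt x atTop u)
    {V : Set (graphWithBase u)} (hV : IsOpen V) (hne : V.Nonempty) :
    ∃ x : graphWithBase u, (x : X × ℝ) ∈ seqGraph u ∧ {x} ⊆ V := by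
  obtain ⟨W, hW, rfl⟩ := isOpen_induced_iff.1 hV
  obtain ⟨⟨p, hp0 | hpS⟩, hpW⟩ := hne
  · have hp : p ∈ closure (seqGraph u) :=
      (Prod.ext rfl hp0 : p = (p.1, 0)) ▸ mem_closure_seqGraph_of_mapClusterPt (hu p.1)
    obtain ⟨q, hqW, hqS⟩ := mem_closure_iff.1 hp W hW hpW
    exact ⟨⟨q, Or.inr hqS⟩, hqS, singleton_subset_iff.2 hqW⟩
  · exact ⟨⟨p, Or.inr hpS⟩, hpS, singleton_subset_iff.2 hpW⟩

end GraphWithBase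

theorem compact_with_countable_pi_basis_of_isolated_points
    (h : ℕ → ℝ → Bool) (hd : DenseRange h) :
    let K : Set ((ℝ → Bool) × ℝ) :=
      {p | p.2 = 0} ∪ {p | ∃ n : ℕ, 0 < n ∧ p = (h n, 1 / (n : ℝ))}
    IsCompact K ∧
    (∀ x : K, (∃ n : ℕ, 0 < n ∧ (x : (ℝ → Bool) × ℝ) = (h n, 1 / (n : ℝ))) →
      IsOpen ({x} : Set K)) ∧
    (∀ V : Set K, IsOpen V → V.Nonempty →
      ∃ x : K, (∃ n : ℕ, 0 < n ∧ (x : (ℝ → Bool) × ℝ) = (h n, 1 / (n : ℝ))) ∧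
        ({x} : Set K) ⊆ V) :=
  ⟨isCompact_graphWithBase, fun _ hx => isOpen_singleton_of_mem_seqGraph hx,
    fun _ hV hne => exists_singleton_subset_of_isOpen hd.mapClusterPt_atTop hV hne⟩
end

section
/- Let Z be a normed space and let X ⊆ Y ⊆ Z be linear subspaces (with the norms inherited from Z). Suppose there is a countable family of closed balls B(x_n, r_n) with centers x_n ∈ X and 0 < r_n < ‖x_n‖ whose union contains the unit sphere of Z. Then both X and Y have the ball-covering property. -/
open Metric ZeroAtInfty
open scoped ENNReal

lemma hasBCP_of_centers_mem (Z : Type*) [NormedAddCommGroup Z] [NormedSpace ℝ Z]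
    (W : Subspace ℝ Z) (c : ℕ → Z) (r : ℕ → ℝ)
    (hc : ∀ n, c n ∈ W)
    (hr : ∀ n, 0 < r n ∧ r n < ‖c n‖)
    (hcover : sphere (0 : Z) 1 ⊆ ⋃ n, closedBall (c n) (r n)) :
    HasBCP ↥W := by
  refine ⟨fun n => ⟨c n, hc n⟩, r, fun n => ?_, ?_⟩
  · simpa [Submodule.norm_coe] using hr n
  · intro x hx
    have hx' : (x : Z) ∈ sphere (0 : Z) 1 := by
      simpa [mem_sphere_iff_norm] using hx
    obtain ⟨n, hn⟩ := Set.mem_iUnion.mp (hcover hx')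
    refine Set.mem_iUnion.mpr ⟨n, ?_⟩
    simpa [Metric.mem_closedBall, Subtype.dist_eq] using hn

theorem bcp_of_centers_in_subspace (Z : Type*) [NormedAddCommGroup Z] [NormedSpace ℝ Z]
    (X Y : Subspace ℝ Z) (hXY : X ≤ Y)
    (c : ℕ → Z) (r : ℕ → ℝ)
    (hc : ∀ n, c n ∈ X)
    (hr : ∀ n, 0 < r n ∧ r n < ‖c n‖)
    (hcover : sphere (0 : Z) 1 ⊆ ⋃ n, closedBall (c n) (r n)) :
    HasBCP ↥X ∧ HasBCP ↥Y := by
  exact ⟨hasBCP_of_centers_mem Z X c r hc hr hcover,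
    hasBCP_of_centers_mem Z Y c r (fun n => hXY (hc n)) hr hcover⟩
end

section
/- Let 1 < p < ∞. Every linear subspace of B(ℓ_p) that contains all finite rank operators on ℓ_p has the uniform ball-covering property; in particular, B(ℓ_p) has the uniform ball-covering property. -/
open Metric ZeroAtInfty
open scoped ENNReal

/-!
Let `1 < p < ∞`, let `q` be the conjugate exponent and `Q n` the projection of `ℓ_p` onto the
first `n` coordinates. As `ℓ_p` is the `ℓ_p`-sum of the ranges of `Q n` and `1 - Q n`, the
reflection `1 - 2 Q n` is an isometry, so an operator `T` of norm one lies within `1` of `2 Q n T`,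
whose norm tends to `2`. Dually, every functional satisfies
`‖φ Q m‖ ^ q + ‖φ (1 - Q m)‖ ^ q ≤ ‖φ‖ ^ q`, and since `‖φ Q m‖ → ‖φ‖` and `q < ∞` this forces
`‖φ (1 - Q m)‖ → 0`. Applied to the first `n` coordinates of `T`, it makes `2 Q n T` a norm limit
of the finite matrices `2 Q n T Q m`. Hence the finite matrices drawn from a dense sequence that
have norm above `7/4` form a countable family of finite-rank centers: the balls of radius `9/8`
around them cover the unit sphere and miss the ball of radius `1/2`.
-/

open Filter Topology

section BallCovering

theorem hasUBCP_of_countable {X : Type*} [NormedAddCommGroup X] {S : Set X} (hS : S.Countable)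
    (hne : S.Nonempty) {r ρ : ℝ} (hr : 0 < r) (hρ : 0 < ρ) (hfar : ∀ c ∈ S, ρ + r < ‖c‖)
    (hcover : ∀ x : X, ‖x‖ = 1 → ∃ c ∈ S, ‖x - c‖ ≤ r) : HasUBCP X := by
  obtain ⟨c, rfl⟩ := hS.exists_eq_range hne
  refine ⟨c, fun _ ↦ r, fun n ↦ ⟨hr, ?_⟩, ⟨r, fun _ ↦ le_rfl⟩,
    ⟨ρ, hρ, fun n ↦ closedBall_disjoint_closedBall ?_⟩, fun x hx ↦ ?_⟩
  · linarith [hfar _ ⟨n, rfl⟩]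
  · simpa using hfar _ ⟨n, rfl⟩
  · obtain ⟨_, ⟨n, rfl⟩, hn⟩ := hcover x (mem_sphere_zero_iff_norm.1 hx)
    exact Set.mem_iUnion.2 ⟨n, by rwa [mem_closedBall, dist_eq_norm]⟩

theorem Submodule.hasUBCP_of_countable {R X : Type*} [Ring R] [NormedAddCommGroup X] [Module R X]
    (E : Submodule R X) {S : Set X} (hSE : S ⊆ E) (hS : S.Countable) (hne : S.Nonempty)
    {r ρ : ℝ} (hr : 0 < r) (hρ : 0 < ρ) (hfar : ∀ c ∈ S, ρ + r < ‖c‖)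
    (hcover : ∀ x : X, ‖x‖ = 1 → ∃ c ∈ S, ‖x - c‖ ≤ r) : HasUBCP E := by
  obtain ⟨c, hc⟩ := hne
  refine _root_.hasUBCP_of_countable (S := Subtype.val ⁻¹' S)
    (hS.preimage Subtype.val_injective) ⟨⟨c, hSE hc⟩, hc⟩ hr hρ (fun c hc ↦ hfar c hc)
    fun x hx ↦ ?_
  obtain ⟨c, hc, hxc⟩ := hcover x hx
  exact ⟨⟨c, hSE hc⟩, hc, hxc⟩

end BallCovering

section OpNorm

variable {𝕜 E F : Type*} [DenselyNormedField 𝕜] [NormedAddCommGroup E] [NormedSpace 𝕜 E]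
  [NormedAddCommGroup F] [NormedSpace 𝕜 F]

theorem ContinuousLinearMap.eventually_lt_opNorm_of_tendsto {ι : Type*} {l : Filter ι}
    {A : ι → E →L[𝕜] F} {B : E →L[𝕜] F} (hAB : ∀ x, Tendsto (fun i ↦ A i x) l (𝓝 (B x)))
    {r : ℝ} (hr : r < ‖B‖) : ∀ᶠ i in l, r < ‖A i‖ := by
  obtain ⟨x, hx, hrx⟩ := B.exists_lt_apply_of_lt_opNorm hr
  filter_upwards [(hAB x).norm.eventually (lt_mem_nhds hrx)] with i hi
  exact hi.trans_le ((A i).unit_le_opNorm x hx.le)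

theorem ContinuousLinearMap.tendsto_opNorm_of_tendsto {ι : Type*} {l : Filter ι}
    {A : ι → E →L[𝕜] F} {B : E →L[𝕜] F} (hAB : ∀ x, Tendsto (fun i ↦ A i x) l (𝓝 (B x)))
    (hle : ∀ i, ‖A i‖ ≤ ‖B‖) : Tendsto (fun i ↦ ‖A i‖) l (𝓝 ‖B‖) :=
  tendsto_order.2 ⟨fun _ hr ↦ eventually_lt_opNorm_of_tendsto hAB hr,
    fun _ hr ↦ .of_forall fun i ↦ (hle i).trans_lt hr⟩

end OpNorm

theorem ContinuousLinearMap.exists_mul_norm_le_apply {E : Type*} [NormedAddCommGroup E]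
    [NormedSpace ℝ E] (φ : E →L[ℝ] ℝ) {c : ℝ} (hc : c < 1) :
    ∃ x, ‖x‖ ≤ 1 ∧ c * ‖φ‖ ≤ φ x := by
  rcases (norm_nonneg φ).eq_or_lt with h | h
  · exact ⟨0, by simp, by simp [← h]⟩
  obtain ⟨x, hx, hφx⟩ := φ.exists_lt_apply_of_lt_opNorm (by nlinarith : c * ‖φ‖ < ‖φ‖)
  rcases le_or_gt 0 (φ x) with hφ | hφ
  · exact ⟨x, hx.le, by rw [Real.norm_of_nonneg hφ] at hφx; exact hφx.le⟩
  · refine ⟨-x, by rw [norm_neg]; exact hx.le, ?_⟩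
    rw [Real.norm_of_nonpos hφ.le] at hφx
    rw [map_neg]
    exact hφx.le

/-- `E` is the `ℓ^p`-sum of the range and the kernel of `P`; for `p = 1` see `IsLprojection`. -/
structure IsLpSumProjection {E : Type*} [NormedAddCommGroup E] [NormedSpace ℝ E] (p : ℝ)
    (P : E →L[ℝ] E) : Prop where
  apply_apply : ∀ x, P (P x) = P x
  norm_rpow_eq : ∀ x, ‖x‖ ^ p = ‖P x‖ ^ p + ‖x - P x‖ ^ p

namespace IsLpSumProjection

variable {E F : Type*} [NormedAddCommGroup E] [NormedSpace ℝ E] [NormedAddCommGroup F]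
  [NormedSpace ℝ F] {p q : ℝ} {P : E →L[ℝ] E}

theorem norm_add_rpow (hP : IsLpSumProjection p P) {x y : E} (hx : P x = x) (hy : P y = 0) :
    ‖x + y‖ ^ p = ‖x‖ ^ p + ‖y‖ ^ p := by
  simpa [hx, hy] using hP.norm_rpow_eq (x + y)

theorem norm_apply_le (hP : IsLpSumProjection p P) (hp : 0 < p) (x : E) : ‖P x‖ ≤ ‖x‖ := by
  rw [← Real.rpow_le_rpow_iff (norm_nonneg _) (norm_nonneg _) hp, hP.norm_rpow_eq x]
  exact le_add_of_nonneg_right (by positivity)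

theorem norm_sub_apply_le (hP : IsLpSumProjection p P) (hp : 0 < p) (x : E) :
    ‖x - P x‖ ≤ ‖x‖ := by
  rw [← Real.rpow_le_rpow_iff (norm_nonneg _) (norm_nonneg _) hp, hP.norm_rpow_eq x]
  exact le_add_of_nonneg_left (by positivity)

theorem opNorm_le_one (hP : IsLpSumProjection p P) (hp : 0 < p) : ‖P‖ ≤ 1 :=
  P.opNorm_le_bound zero_le_one fun x ↦ by simpa using hP.norm_apply_le hp x

theorem norm_sub_two_smul_apply (hP : IsLpSumProjection p P) (hp : 0 < p) (x : E) :
    ‖x - (2 : ℝ) • P x‖ = ‖x‖ := by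
  have h := hP.norm_add_rpow (x := -P x) (y := x - P x) (by simp [hP.apply_apply])
    (by simp [hP.apply_apply])
  rw [norm_neg, ← hP.norm_rpow_eq x, show -P x + (x - P x) = x - (2 : ℝ) • P x by module] at h
  exact Real.rpow_left_injOn hp.ne' (norm_nonneg _) (norm_nonneg _) h

theorem norm_sub_two_smul_comp_le (hP : IsLpSumProjection p P) (hp : 0 < p) (T : F →L[ℝ] E) :
    ‖T - (2 : ℝ) • (P ∘L T)‖ ≤ ‖T‖ :=
  (T - (2 : ℝ) • (P ∘L T)).opNorm_le_bound (norm_nonneg T) fun x ↦ by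
    simpa [hP.norm_sub_two_smul_apply hp] using T.le_opNorm x

theorem rpow_add_rpow_le_of_le_apply (hP : IsLpSumProjection p P) (hpq : p.HolderConjugate q)
    (φ : E →L[ℝ] ℝ) {x y : E} (hx : P x = x) (hy : P y = 0) (hx1 : ‖x‖ ≤ 1) (hy1 : ‖y‖ ≤ 1)
    {a b : ℝ} (ha : 0 ≤ a) (hb : 0 ≤ b) (hax : a ≤ φ x) (hby : b ≤ φ y) :
    a ^ q + b ^ q ≤ ‖φ‖ ^ q := by
  have hp := hpq.pos
  have hq := hpq.symm.pos
  set A := a ^ q + b ^ q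
  -- these weights turn Hölder's inequality for the pair `(a, b)` into an equality
  set w := a ^ (q - 1) • x + b ^ (q - 1) • y
  have hA : 0 ≤ A := by positivity
  have hw : ‖w‖ ^ p ≤ A := by
    rw [hP.norm_add_rpow (by simp [hx]) (by simp [hy]), norm_smul, norm_smul,
      Real.mul_rpow (norm_nonneg _) (norm_nonneg _), Real.mul_rpow (norm_nonneg _) (norm_nonneg _),
      Real.norm_of_nonneg (by positivity), Real.norm_of_nonneg (by positivity),
      ← Real.rpow_mul ha, ← Real.rpow_mul hb, hpq.symm.sub_one_mul_conj]
    have hx1 : ‖x‖ ^ p ≤ 1 := Real.rpow_le_one (norm_nonneg _) hx1 hp.le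
    have hy1 : ‖y‖ ^ p ≤ 1 := Real.rpow_le_one (norm_nonneg _) hy1 hp.le
    nlinarith [Real.rpow_nonneg ha q, Real.rpow_nonneg hb q]
  have hφw : A ≤ φ w := by
    have hpow : ∀ c : ℝ, 0 ≤ c → c ^ q = c ^ (q - 1) * c := fun c hc ↦ by
      conv_lhs => rw [← sub_add_cancel q 1, Real.rpow_add' hc (by linarith), Real.rpow_one]
    simp only [A, w, map_add, map_smul, smul_eq_mul, hpow a ha, hpow b hb]
    gcongr
  have hAw : A ≤ ‖φ‖ * A ^ p⁻¹ :=
    calc A ≤ φ w := hφw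
    _ ≤ ‖φ‖ * ‖w‖ := (le_abs_self _).trans (φ.le_opNorm w)
    _ ≤ ‖φ‖ * A ^ p⁻¹ := by
      gcongr
      exact (Real.le_rpow_inv_iff_of_pos (norm_nonneg _) hA hp).2 hw
  rcases hA.eq_or_lt with h0 | hpos
  · rw [← h0]
    positivity
  rw [← Real.rpow_inv_le_iff_of_pos hA (norm_nonneg _) hq]
  have hsplit : A = A ^ p⁻¹ * A ^ q⁻¹ := by
    rw [← Real.rpow_add hpos, hpq.inv_add_inv_eq_one, Real.rpow_one]
  refine le_of_mul_le_mul_left ?_ (Real.rpow_pos_of_pos hpos p⁻¹)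
  rwa [← hsplit, mul_comm]

theorem rpow_norm_comp_add_rpow_norm_sub_comp_le (hP : IsLpSumProjection p P)
    (hpq : p.HolderConjugate q) (φ : E →L[ℝ] ℝ) :
    ‖φ ∘L P‖ ^ q + ‖φ - φ ∘L P‖ ^ q ≤ ‖φ‖ ^ q := by
  have hp := hpq.pos
  have hq := hpq.symm.pos
  have hlim : Tendsto (fun c : ℝ ↦ (c * ‖φ ∘L P‖) ^ q + (c * ‖φ - φ ∘L P‖) ^ q) (𝓝[<] 1)
      (𝓝 (‖φ ∘L P‖ ^ q + ‖φ - φ ∘L P‖ ^ q)) := by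
    have hc : Continuous fun c : ℝ ↦ (c * ‖φ ∘L P‖) ^ q + (c * ‖φ - φ ∘L P‖) ^ q := by
      fun_prop (disch := positivity)
    simpa using (hc.tendsto 1).mono_left nhdsWithin_le_nhds
  refine le_of_tendsto hlim ?_
  filter_upwards [Ioo_mem_nhdsLT (zero_lt_one' ℝ)] with c hc
  obtain ⟨u, hu, hφu⟩ := (φ ∘L P).exists_mul_norm_le_apply hc.2
  obtain ⟨v, hv, hφv⟩ := (φ - φ ∘L P).exists_mul_norm_le_apply hc.2
  refine hP.rpow_add_rpow_le_of_le_apply hpq φ (x := P u) (y := v - P v) (hP.apply_apply u)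
    (by simp [hP.apply_apply]) ((hP.norm_apply_le hp u).trans hu)
    ((hP.norm_sub_apply_le hp v).trans hv) (by have := hc.1; positivity)
    (by have := hc.1; positivity) hφu (by simpa using hφv)

theorem tendsto_norm_sub_comp {P : ℕ → E →L[ℝ] E} (hP : ∀ m, IsLpSumProjection p (P m))
    (hpq : p.HolderConjugate q) (hPx : ∀ x, Tendsto (fun m ↦ P m x) atTop (𝓝 x))
    (φ : E →L[ℝ] ℝ) : Tendsto (fun m ↦ ‖φ - φ ∘L P m‖) atTop (𝓝 0) := by
  have hp := hpq.pos
  have hq := hpq.symm.pos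
  have hhead : Tendsto (fun m ↦ ‖φ ∘L P m‖) atTop (𝓝 ‖φ‖) :=
    ContinuousLinearMap.tendsto_opNorm_of_tendsto (fun x ↦ (φ.continuous.tendsto x).comp (hPx x))
      fun m ↦ (φ.opNorm_comp_le _).trans
        (mul_le_of_le_one_right (norm_nonneg φ) ((hP m).opNorm_le_one hp))
  have htail : Tendsto (fun m ↦ ‖φ - φ ∘L P m‖ ^ q) atTop (𝓝 0) := by
    refine squeeze_zero (fun m ↦ by positivity) (fun m ↦ ?_)
      (by simpa using (hhead.rpow_const (Or.inr hq.le)).const_sub (‖φ‖ ^ q))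
    linarith [(hP m).rpow_norm_comp_add_rpow_norm_sub_comp_le hpq φ]
  simpa [Real.rpow_rpow_inv (norm_nonneg _) hq.ne', Real.zero_rpow (inv_ne_zero hq.ne')] using
    htail.rpow_const (p := q⁻¹) (Or.inr (inv_nonneg.2 hq.le))

end IsLpSumProjection

section lp

variable (p : ℝ≥0∞) [Fact (1 ≤ p)]

local notation "ℓp" => lp (fun _ : ℕ => ℝ) p

noncomputable def lpHead (m : ℕ) : ℓp →L[ℝ] (Fin m → ℝ) :=
  ContinuousLinearMap.pi fun j ↦ lp.evalCLM ℝ (fun _ : ℕ => ℝ) p j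

noncomputable def lpOfFin (n : ℕ) : (Fin n → ℝ) →L[ℝ] ℓp :=
  ∑ i : Fin n, lp.singleContinuousLinearMap ℝ (fun _ : ℕ => ℝ) p i ∘L ContinuousLinearMap.proj i

noncomputable def lpTrunc (m : ℕ) : ℓp →L[ℝ] ℓp := lpOfFin p m ∘L lpHead p m

noncomputable def lpCenter (n m k : ℕ) : ℓp →L[ℝ] ℓp :=
  lpOfFin p n ∘L TopologicalSpace.denseSeq ((Fin m → ℝ) →L[ℝ] (Fin n → ℝ)) k ∘L lpHead p m

variable {p}

theorem lpOfFin_apply {n : ℕ} (a : Fin n → ℝ) :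
    lpOfFin p n a = ∑ i : Fin n, (lp.single p (i : ℕ) (a i) : ℓp) := by
  simp [lpOfFin]

theorem lpTrunc_apply (m : ℕ) (u : ℓp) :
    lpTrunc p m u = ∑ i ∈ Finset.range m, lp.single p i (u i) := by
  rw [lpTrunc, ContinuousLinearMap.comp_apply, lpOfFin_apply]
  exact Fin.sum_univ_eq_sum_range (fun i ↦ (lp.single p i (u i) : ℓp)) m

theorem lpTrunc_lpTrunc (m : ℕ) (u : ℓp) : lpTrunc p m (lpTrunc p m u) = lpTrunc p m u := by
  rw [lpTrunc_apply, lpTrunc_apply]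
  refine Finset.sum_congr rfl fun i hi ↦ ?_
  rw [lp.coeFn_sum, Finset.sum_apply]
  simp [hi]

theorem isLpSumProjection_lpTrunc (hp : p ≠ ⊤) (m : ℕ) :
    IsLpSumProjection p.toReal (lpTrunc p m) := by
  have hp0 : 0 < p.toReal := ENNReal.toReal_pos (zero_lt_one.trans_le Fact.out).ne' hp
  refine ⟨lpTrunc_lpTrunc m, fun u ↦ ?_⟩
  rw [lpTrunc_apply, lp.norm_sum_single hp0, lp.norm_compl_sum_single hp0]
  ring

theorem tendsto_lpTrunc (hp : p ≠ ⊤) (u : ℓp) :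
    Tendsto (fun m ↦ lpTrunc p m u) atTop (𝓝 u) := by
  simpa only [lpTrunc_apply] using (lp.hasSum_single hp u).tendsto_sum_nat

theorem norm_lpTrunc_comp_le {F : Type*} [NormedAddCommGroup F] [NormedSpace ℝ F] (n : ℕ)
    (A : F →L[ℝ] ℓp) :
    ‖lpTrunc p n ∘L A‖ ≤ ∑ i ∈ Finset.range n, ‖lp.evalCLM ℝ (fun _ : ℕ => ℝ) p i ∘L A‖ := by
  refine ContinuousLinearMap.opNorm_le_bound _ (by positivity) fun u ↦ ?_
  rw [ContinuousLinearMap.comp_apply, lpTrunc_apply, Finset.sum_mul]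
  refine (norm_sum_le _ _).trans (Finset.sum_le_sum fun i _ ↦ ?_)
  rw [lp.norm_single (zero_lt_one.trans_le Fact.out)]
  exact (lp.evalCLM ℝ (fun _ : ℕ => ℝ) p i ∘L A).le_opNorm u

theorem tendsto_norm_lpTrunc_comp_sub (hp1 : 1 < p) (hp : p ≠ ⊤) (S : ℓp →L[ℝ] ℓp) (n : ℕ) :
    Tendsto (fun m ↦ ‖lpTrunc p n ∘L S - lpTrunc p n ∘L S ∘L lpTrunc p m‖) atTop (𝓝 0) := by
  have hpq : p.toReal.HolderConjugate p.toReal.conjExponent :=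
    .conjExponent (by simpa using ENNReal.toReal_strict_mono hp hp1)
  have hrows := tendsto_finsetSum (Finset.range n) fun i _ ↦
    IsLpSumProjection.tendsto_norm_sub_comp (isLpSumProjection_lpTrunc hp) hpq
      (tendsto_lpTrunc hp) (lp.evalCLM ℝ (fun _ : ℕ => ℝ) p i ∘L S)
  refine squeeze_zero (fun _ ↦ norm_nonneg _) (fun m ↦ ?_) (by simpa using hrows)
  rw [← ContinuousLinearMap.comp_sub]
  refine (norm_lpTrunc_comp_le n _).trans_eq (Finset.sum_congr rfl fun i _ ↦ ?_)
  rw [ContinuousLinearMap.comp_sub, ContinuousLinearMap.comp_assoc]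

theorem finiteDimensional_range_lpCenter (n m k : ℕ) :
    FiniteDimensional ℝ (LinearMap.range (lpCenter p n m k).toLinearMap) :=
  Submodule.finiteDimensional_of_le (LinearMap.range_comp_le_range _ (lpOfFin p n).toLinearMap)

theorem exists_lpCenter_near (hp1 : 1 < p) (hp : p ≠ ⊤) (S : ℓp →L[ℝ] ℓp) (n : ℕ) {ε : ℝ}
    (hε : 0 < ε) : ∃ m k, ‖lpTrunc p n ∘L S - lpCenter p n m k‖ < ε := by
  obtain ⟨m, hm⟩ := ((tendsto_norm_lpTrunc_comp_sub hp1 hp S n).eventually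
    (gt_mem_nhds (half_pos hε))).exists
  let Ψ : ((Fin m → ℝ) →L[ℝ] (Fin n → ℝ)) → (ℓp →L[ℝ] ℓp) := fun B ↦
    lpOfFin p n ∘L B ∘L lpHead p m
  have hΨ : Continuous Ψ := by fun_prop
  have hQSQ : lpTrunc p n ∘L S ∘L lpTrunc p m = Ψ (lpHead p n ∘L S ∘L lpOfFin p m) := by
    simp only [Ψ, lpTrunc, ContinuousLinearMap.comp_assoc]
  obtain ⟨k, hk⟩ := (TopologicalSpace.denseRange_denseSeq _).exists_mem_open
    (isOpen_ball.preimage hΨ) ⟨_, mem_ball_self (half_pos hε)⟩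
  refine ⟨m, k, ?_⟩
  calc ‖lpTrunc p n ∘L S - lpCenter p n m k‖
      ≤ ‖lpTrunc p n ∘L S - lpTrunc p n ∘L S ∘L lpTrunc p m‖
        + ‖lpTrunc p n ∘L S ∘L lpTrunc p m - lpCenter p n m k‖ :=
        norm_sub_le_norm_sub_add_norm_sub _ _ _
    _ < ε / 2 + ε / 2 := by
      gcongr
      rw [hQSQ, ← dist_eq_norm, dist_comm]
      exact hk
    _ = ε := add_halves ε

theorem exists_lpCenter_near_of_norm_eq_one (hp1 : 1 < p) (hp : p ≠ ⊤) (T : ℓp →L[ℝ] ℓp)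
    (hT : ‖T‖ = 1) : ∃ n m k, ‖T - lpCenter p n m k‖ ≤ 9 / 8 ∧ 7 / 4 < ‖lpCenter p n m k‖ := by
  have hp0 : 0 < p.toReal := ENNReal.toReal_pos (zero_lt_one.trans hp1).ne' hp
  obtain ⟨n, hn⟩ := (ContinuousLinearMap.eventually_lt_opNorm_of_tendsto
    (A := fun n ↦ lpTrunc p n ∘L T) (fun x ↦ tendsto_lpTrunc hp (T x))
    (show 15 / 16 < ‖T‖ by norm_num [hT])).exists
  obtain ⟨m, k, hc⟩ := exists_lpCenter_near hp1 hp ((2 : ℝ) • T) n (ε := 1 / 8) (by norm_num)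
  rw [ContinuousLinearMap.comp_smul] at hc
  have hreflect := (isLpSumProjection_lpTrunc hp n).norm_sub_two_smul_comp_le hp0 T
  have hnorm : ‖(2 : ℝ) • (lpTrunc p n ∘L T)‖ = 2 * ‖lpTrunc p n ∘L T‖ := by
    rw [norm_smul, Real.norm_two]
  refine ⟨n, m, k, ?_, ?_⟩
  · linarith [norm_sub_le_norm_sub_add_norm_sub T ((2 : ℝ) • (lpTrunc p n ∘L T)) (lpCenter p n m k)]
  · linarith [norm_sub_norm_le ((2 : ℝ) • (lpTrunc p n ∘L T)) (lpCenter p n m k)]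

theorem exists_countable_lpCenters (hp1 : 1 < p) (hp : p ≠ ⊤) :
    ∃ S : Set (ℓp →L[ℝ] ℓp), S.Countable ∧ S.Nonempty ∧
      (∀ c ∈ S, FiniteDimensional ℝ (LinearMap.range c.toLinearMap)) ∧
      (∀ c ∈ S, 1 / 2 + 9 / 8 < ‖c‖) ∧
      ∀ T : ℓp →L[ℝ] ℓp, ‖T‖ = 1 → ∃ c ∈ S, ‖T - c‖ ≤ 9 / 8 := by
  refine ⟨{c | (∃ n m k, lpCenter p n m k = c) ∧ 7 / 4 < ‖c‖}, ?_, ?_, ?_, ?_, ?_⟩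
  · refine (Set.countable_range fun x : ℕ × ℕ × ℕ ↦ lpCenter p x.1 x.2.1 x.2.2).mono ?_
    rintro c ⟨⟨n, m, k, rfl⟩, -⟩
    exact ⟨(n, m, k), rfl⟩
  · have : Nontrivial ℓp := nontrivial_of_ne (lp.single p 0 1) 0 (by
      rw [← norm_ne_zero_iff, lp.norm_single (zero_lt_one.trans hp1)]
      norm_num)
    obtain ⟨n, m, k, -, hc⟩ := exists_lpCenter_near_of_norm_eq_one hp1 hp _
      (ContinuousLinearMap.norm_id (𝕜 := ℝ) (E := ℓp))
    exact ⟨_, ⟨n, m, k, rfl⟩, hc⟩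
  · rintro c ⟨⟨n, m, k, rfl⟩, -⟩
    exact finiteDimensional_range_lpCenter n m k
  · rintro c ⟨-, hc⟩
    linarith
  · intro T hT
    obtain ⟨n, m, k, hT, hc⟩ := exists_lpCenter_near_of_norm_eq_one hp1 hp T hT
    exact ⟨_, ⟨⟨n, m, k, rfl⟩, hc⟩, hT⟩

end lp


theorem ubcp_subspace_of_operators_on_lp
    (p : ℝ≥0∞) [Fact (1 ≤ p)] (hp : 1 < p) (hp' : p < ⊤) :
    (∀ E : Subspace ℝ (lp (fun _ : ℕ => ℝ) p →L[ℝ] lp (fun _ : ℕ => ℝ) p),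
      (∀ T : lp (fun _ : ℕ => ℝ) p →L[ℝ] lp (fun _ : ℕ => ℝ) p,
        FiniteDimensional ℝ (LinearMap.range T.toLinearMap) → T ∈ E) →
      HasUBCP ↥E) ∧
    HasUBCP (lp (fun _ : ℕ => ℝ) p →L[ℝ] lp (fun _ : ℕ => ℝ) p) := by
  obtain ⟨S, hS, hne, hrank, hfar, hcover⟩ := exists_countable_lpCenters hp hp'.ne
  exact ⟨fun E hE ↦ E.hasUBCP_of_countable (fun c hc ↦ hE c (hrank c hc)) hS hne
      (by norm_num) (by norm_num) hfar hcover,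
    hasUBCP_of_countable hS hne (by norm_num) (by norm_num) hfar hcover⟩
end

section
/- Let X and Y be nonzero Banach spaces. If the space B(X, Y) of bounded linear operators from X to Y has the ball-covering property, then both the dual space X* and the space Y have the ball-covering property. -/
open Metric ZeroAtInfty
open scoped ENNReal

/-! Embed `Y` and `X*` isometrically into `B(X, Y)` by `y ↦ f₀ ⊗ y` and `f ↦ f ⊗ y₀`, for a
unit functional `f₀` and a unit vector `y₀`. Push each ball `B(Tₙ, rₙ)` of the covering back
through a contraction: `S ↦ S xₙ` resp. `S ↦ gₙ ∘ S`, with `‖xₙ‖ ≤ 1` and `‖gₙ‖ = 1` chosen so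
that `rₙ < ‖Tₙ xₙ‖` resp. `rₙ < ‖gₙ ∘ Tₙ‖`; then the image ball still misses the origin. On the
embedded copy the contraction is multiplication by the scalar `f₀ xₙ` resp. `gₙ y₀`, and dividing
by it turns the image balls into a covering of the unit sphere. -/

open ContinuousLinearMap

section BallCovering

variable {V W : Type*} [NormedAddCommGroup V] [NormedAddCommGroup W] [NormedSpace ℝ W]

theorem HasBCP.of_forall_smul_mem_closedBall (a : ℕ → ℝ) (c : ℕ → W) (r : ℕ → ℝ)
    (hr : ∀ n, 0 < r n ∧ r n < ‖c n‖)
    (hcov : ∀ w ∈ sphere (0 : W) 1, ∃ n, a n • w ∈ closedBall (c n) (r n)) : HasBCP W := by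
  refine ⟨fun n => if a n = 0 then c n else (a n)⁻¹ • c n,
    fun n => if a n = 0 then r n else r n / |a n|, fun n => ?_, fun w hw => ?_⟩
  · by_cases ha : a n = 0
    · simpa only [ha, if_true] using hr n
    · have ha' : 0 < |a n| := abs_pos.2 ha
      simp only [ha, if_false, norm_smul, norm_inv, Real.norm_eq_abs, inv_mul_eq_div]
      exact ⟨div_pos (hr n).1 ha', div_lt_div_of_pos_right (hr n).2 ha'⟩
  · obtain ⟨n, hn⟩ := hcov w hw
    -- `a n = 0` would put the origin in the `n`-th ball
    have ha : a n ≠ 0 := by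
      rintro ha
      rw [ha, zero_smul, mem_closedBall, dist_comm, dist_zero_right] at hn
      exact hn.not_gt (hr n).2
    refine Set.mem_iUnion.2 ⟨n, ?_⟩
    simp only [ha, if_false, mem_closedBall, dist_eq_norm] at hn ⊢
    calc ‖w - (a n)⁻¹ • c n‖ = ‖a n • w - c n‖ / |a n| := by
          rw [div_eq_inv_mul, ← abs_inv, ← Real.norm_eq_abs, ← norm_smul, smul_sub,
            inv_smul_smul₀ ha]
      _ ≤ r n / |a n| := by gcongr

theorem HasBCP.of_lipschitz_scalar_retractions (c : ℕ → V) (r : ℕ → ℝ)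
    (hcov : sphere (0 : V) 1 ⊆ ⋃ n, closedBall (c n) (r n))
    (J : W → V) (hJ : Set.MapsTo J (sphere 0 1) (sphere 0 1))
    (P : ℕ → V → W) (hP : ∀ n, LipschitzWith 1 (P n)) (a : ℕ → ℝ)
    (hPJ : ∀ n w, P n (J w) = a n • w) (hr : ∀ n, 0 < r n ∧ r n < ‖P n (c n)‖) :
    HasBCP W := by
  refine HasBCP.of_forall_smul_mem_closedBall a (fun n => P n (c n)) r hr fun w hw => ?_
  obtain ⟨n, hn⟩ := Set.mem_iUnion.1 (hcov (hJ hw))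
  refine ⟨n, ?_⟩
  rw [← hPJ, mem_closedBall]
  calc dist (P n (J w)) (P n (c n)) ≤ dist (J w) (c n) := by simpa using (hP n).dist_le_mul _ _
    _ ≤ r n := mem_closedBall.1 hn

end BallCovering

section Operators

variable {X Y : Type*} [NormedAddCommGroup X] [NormedSpace ℝ X]
  [NormedAddCommGroup Y] [NormedSpace ℝ Y]

theorem ContinuousLinearMap.lipschitzWith_one_comp_left {g : StrongDual ℝ Y} (hg : ‖g‖ ≤ 1) :
    LipschitzWith 1 fun S : X →L[ℝ] Y => g.comp S :=
  LipschitzWith.of_dist_le_mul fun S S' => by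
    rw [dist_eq_norm, dist_eq_norm, ← comp_sub, NNReal.coe_one, one_mul]
    exact (opNorm_comp_le g _).trans (mul_le_of_le_one_left (norm_nonneg _) hg)

theorem ContinuousLinearMap.lipschitzWith_one_apply {x : X} (hx : ‖x‖ ≤ 1) :
    LipschitzWith 1 fun S : X →L[ℝ] Y => S x :=
  LipschitzWith.of_dist_le_mul fun S S' => by
    rw [dist_eq_norm, dist_eq_norm, ← sub_apply, NNReal.coe_one, one_mul]
    exact (le_opNorm _ x).trans (mul_le_of_le_one_right (norm_nonneg _) hx)

theorem ContinuousLinearMap.norm_smulRight_of_norm_eq_one {f : StrongDual ℝ X} {y : Y}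
    (hf : ‖f‖ = 1) (hy : ‖y‖ = 1) : ‖f.smulRight y‖ = 1 := by
  rw [norm_smulRight_apply, hf, hy, one_mul]

theorem ContinuousLinearMap.exists_norm_eq_one_lt_norm_comp {T : X →L[ℝ] Y} {r : ℝ}
    (hr₀ : 0 ≤ r) (hr : r < ‖T‖) : ∃ g : StrongDual ℝ Y, ‖g‖ = 1 ∧ r < ‖g.comp T‖ := by
  obtain ⟨x, hx, hTx⟩ := T.exists_lt_apply_of_lt_opNorm hr
  obtain ⟨g, hg, hgTx⟩ := exists_dual_vector ℝ (T x) (hr₀.trans_lt hTx).ne'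
  refine ⟨g, hg, hTx.trans_le ?_⟩
  calc ‖T x‖ = ‖g.comp T x‖ := by simp [hgTx]
    _ ≤ ‖g.comp T‖ * ‖x‖ := le_opNorm _ _
    _ ≤ ‖g.comp T‖ := mul_le_of_le_one_right (norm_nonneg _) hx.le

end Operators

theorem bcp_dual_and_codomain_of_bcp_operators_general
    (X : Type*) [NormedAddCommGroup X] [NormedSpace ℝ X] [Nontrivial X]
    (Y : Type*) [NormedAddCommGroup Y] [NormedSpace ℝ Y] [Nontrivial Y]
    (h : HasBCP (X →L[ℝ] Y)) :
    HasBCP (StrongDual ℝ X) ∧ HasBCP Y := by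
  obtain ⟨T, r, hr, hcov⟩ := h
  obtain ⟨f₀, hf₀, -⟩ := exists_dual_vector' ℝ (0 : X)
  obtain ⟨y₀, hy₀⟩ := exists_norm_eq Y zero_le_one
  constructor
  · choose g hg hgT using fun n => exists_norm_eq_one_lt_norm_comp (hr n).1.le (hr n).2
    refine HasBCP.of_lipschitz_scalar_retractions T r hcov (fun f => f.smulRight y₀)
      (fun f hf => ?_) (fun n S => (g n).comp S)
      (fun n => lipschitzWith_one_comp_left (hg n).le) (fun n => g n y₀)
      (fun n f => ?_) fun n => ⟨(hr n).1, hgT n⟩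
    · simpa using norm_smulRight_of_norm_eq_one (by simpa using hf) hy₀
    · ext z
      simp [mul_comm]
  · choose x hx hTx using fun n => (T n).exists_lt_apply_of_lt_opNorm (hr n).2
    refine HasBCP.of_lipschitz_scalar_retractions T r hcov (fun y => f₀.smulRight y)
      (fun y hy => ?_) (fun n S => S (x n))
      (fun n => lipschitzWith_one_apply (hx n).le) (fun n => f₀ (x n))
      (fun n y => by simp) fun n => ⟨(hr n).1, hTx n⟩
    simpa using norm_smulRight_of_norm_eq_one hf₀ (by simpa using hy)

theorem bcp_dual_and_codomain_of_bcp_operators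
    (X : Type*) [NormedAddCommGroup X] [NormedSpace ℝ X] [CompleteSpace X] [Nontrivial X]
    (Y : Type*) [NormedAddCommGroup Y] [NormedSpace ℝ Y] [CompleteSpace Y] [Nontrivial Y]
    (h : HasBCP (X →L[ℝ] Y)) :
    HasBCP (StrongDual ℝ X) ∧ HasBCP Y :=
  bcp_dual_and_codomain_of_bcp_operators_general X Y h
end

section
/- The space B(L^1[0,1]) of bounded linear operators on the Banach space L^1[0,1] (real-valued Lebesgue integrable functions on [0,1] with the L^1 norm) does not have the ball-covering property. -/
open Metric ZeroAtInfty
open scoped ENNReal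

/-!
If balls `B(Tₙ, rₙ)` with `rₙ < ‖Tₙ‖` covered the unit sphere of `B(L¹[0,1])`, pick `fₙ` with
`rₙ ‖fₙ‖ < ‖Tₙ fₙ‖`. The `L¹` norm is additive over a measurable partition of `[0,1]`, so one half
of any bisection of the support of `fₙ` still satisfies this inequality; bisecting repeatedly
shrinks the support to a set `sₙ` of measure as small as we like, say with `∑ |sₙ| < 1`.
Multiplication by the indicator of `D = [0,1] \ ⋃ sₙ`, a set of positive measure, then has
norm one and kills every `fₙ`, so its distance to each `Tₙ` exceeds `rₙ`.
-/

open MeasureTheory Set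

namespace ContinuousLinearMap

variable {𝕜 E F : Type*} [NormedAddCommGroup E] [SeminormedAddCommGroup F] {r : ℝ}

theorem exists_mul_norm_lt_norm_apply [DenselyNormedField 𝕜] [NormedSpace 𝕜 E] [NormedSpace 𝕜 F]
    (T : E →L[𝕜] F) (hr₀ : 0 ≤ r) (hr : r < ‖T‖) :
    ∃ x, r * ‖x‖ < ‖T x‖ := by
  obtain ⟨x, hx, hTx⟩ := T.exists_lt_apply_of_lt_opNorm hr
  exact ⟨x, (mul_le_of_le_one_right hr₀ hx.le).trans_lt hTx⟩

theorem lt_opNorm_sub_of_apply_eq_zero [NontriviallyNormedField 𝕜] [NormedSpace 𝕜 E]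
    [NormedSpace 𝕜 F] {T S : E →L[𝕜] F} {x : E} (hSx : S x = 0)
    (hTx : r * ‖x‖ < ‖T x‖) : r < ‖T - S‖ := by
  by_contra! h
  have hle := (T - S).le_opNorm x
  rw [sub_apply, hSx, sub_zero] at hle
  exact hTx.not_ge (hle.trans (mul_le_mul_of_nonneg_right h (norm_nonneg x)))

end ContinuousLinearMap

namespace MeasureTheory.Lp

variable {α E 𝕜 : Type*} [MeasurableSpace α] {μ : Measure α} [NormedAddCommGroup E]
  [NontriviallyNormedField 𝕜] [NormedSpace 𝕜 E] {p : ℝ≥0∞} [Fact (1 ≤ p)] {s : Set α}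

variable (𝕜) in
noncomputable def indicatorCLM (hs : MeasurableSet s) : Lp E p μ →L[𝕜] Lp E p μ :=
  LinearMap.mkContinuous
    { toFun f := ((Lp.memLp f).indicator hs).toLp _
      map_add' f g := by
        rw [← MemLp.toLp_add]
        exact MemLp.toLp_congr _ _
          ((Lp.coeFn_add f g).indicator.trans (indicator_add' s _ _).eventuallyEq)
      map_smul' c f := by
        rw [RingHom.id_apply, ← MemLp.toLp_const_smul]
        exact MemLp.toLp_congr _ _
          ((Lp.coeFn_smul c f).indicator.trans (indicator_const_smul s c f).eventuallyEq) } 1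
    fun f ↦ by
      change ‖((Lp.memLp f).indicator hs).toLp _‖ ≤ 1 * ‖f‖
      rw [Lp.norm_toLp, one_mul, Lp.norm_def]
      exact ENNReal.toReal_mono (Lp.eLpNorm_ne_top f) (eLpNorm_indicator_le _)

theorem coeFn_indicatorCLM (hs : MeasurableSet s) (f : Lp E p μ) :
    indicatorCLM 𝕜 hs f =ᵐ[μ] s.indicator f := by
  rw [indicatorCLM, LinearMap.mkContinuous_apply, LinearMap.coe_mk, AddHom.coe_mk]
  exact MemLp.coeFn_toLp _

theorem opNorm_indicatorCLM_le (hs : MeasurableSet s) :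
    ‖(indicatorCLM 𝕜 hs : Lp E p μ →L[𝕜] Lp E p μ)‖ ≤ 1 :=
  LinearMap.mkContinuous_norm_le _ zero_le_one _

theorem indicatorCLM_add_indicatorCLM_compl (hs : MeasurableSet s) (f : Lp E p μ) :
    indicatorCLM 𝕜 hs f + indicatorCLM 𝕜 hs.compl f = f := by
  apply Lp.ext
  filter_upwards [Lp.coeFn_add (indicatorCLM 𝕜 hs f) (indicatorCLM 𝕜 hs.compl f),
    coeFn_indicatorCLM (𝕜 := 𝕜) hs f, coeFn_indicatorCLM (𝕜 := 𝕜) hs.compl f] with x hx h₁ h₂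
  rw [hx, Pi.add_apply, h₁, h₂, indicator_self_add_compl_apply]

theorem ae_indicatorCLM_ne_zero (hs : MeasurableSet s) (f : Lp E p μ) :
    ∀ᵐ x ∂μ, indicatorCLM 𝕜 hs f x ≠ 0 → x ∈ s ∧ f x ≠ 0 := by
  filter_upwards [coeFn_indicatorCLM (𝕜 := 𝕜) hs f] with x hx
  rw [hx]
  exact indicator_apply_ne_zero.1

theorem indicatorCLM_eq_zero (hs : MeasurableSet s) {f : Lp E p μ}
    (hf : ∀ᵐ x ∂μ, x ∈ s → f x = 0) : indicatorCLM 𝕜 hs f = 0 := by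
  apply Lp.ext
  filter_upwards [coeFn_indicatorCLM (𝕜 := 𝕜) hs f, hf, Lp.coeFn_zero E p μ] with x hx hfx h0
  rw [hx, h0, Pi.zero_apply, indicator_apply_eq_zero]
  exact hfx

theorem opNorm_indicatorCLM [Nontrivial E] (hs : MeasurableSet s) (hμ₀ : μ s ≠ 0) (hμ : μ s ≠ ∞) :
    ‖(indicatorCLM 𝕜 hs : Lp E p μ →L[𝕜] Lp E p μ)‖ = 1 := by
  obtain ⟨c, hc⟩ := exists_ne (0 : E)
  set g := indicatorConstLp p hs hμ c
  have hg : ‖g‖ ≠ 0 := by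
    rw [norm_indicatorConstLp' (zero_lt_one.trans_le (Fact.out : 1 ≤ p)).ne' hμ₀]
    exact mul_ne_zero (norm_ne_zero_iff.2 hc)
      (Real.rpow_pos_of_pos (ENNReal.toReal_pos hμ₀ hμ) _).ne'
  have hgs : ⇑g =ᵐ[μ] s.indicator fun _ ↦ c := indicatorConstLp_coeFn
  have hfix : indicatorCLM 𝕜 hs g = g := by
    refine Lp.ext ((coeFn_indicatorCLM hs g).trans (hgs.indicator.trans ?_))
    rw [indicator_indicator, inter_self]
    exact hgs.symm
  refine (opNorm_indicatorCLM_le hs).antisymm ?_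
  simpa [hfix, div_self hg] using (indicatorCLM 𝕜 hs).ratio_le_opNorm g

end MeasureTheory.Lp

namespace MeasureTheory.L1

variable {α E 𝕜 F : Type*} [MeasurableSpace α] {μ : Measure α} [NormedAddCommGroup E]
  [NontriviallyNormedField 𝕜] [NormedSpace 𝕜 E] [SeminormedAddCommGroup F] [NormedSpace 𝕜 F]
  {T : (α →₁[μ] E) →L[𝕜] F} {s : Set α} {g : α → ℝ} {r c L : ℝ} {f : α →₁[μ] E}

theorem norm_indicatorCLM (hs : MeasurableSet s) (f : α →₁[μ] E) :
    ‖Lp.indicatorCLM 𝕜 hs f‖ = ∫ x in s, ‖f x‖ ∂μ := by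
  rw [L1.norm_eq_integral_norm, ← integral_indicator hs]
  refine integral_congr_ae ((Lp.coeFn_indicatorCLM (𝕜 := 𝕜) hs f).mono fun x hx ↦ ?_)
  simp only [hx, norm_indicator_eq_indicator_norm]

theorem norm_indicatorCLM_add_norm_indicatorCLM_compl (hs : MeasurableSet s)
    (f : α →₁[μ] E) : ‖Lp.indicatorCLM 𝕜 hs f‖ + ‖Lp.indicatorCLM 𝕜 hs.compl f‖ = ‖f‖ := by
  rw [norm_indicatorCLM (𝕜 := 𝕜), norm_indicatorCLM (𝕜 := 𝕜),
    integral_add_compl hs (L1.integrable_coeFn f).norm,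
    L1.norm_eq_integral_norm]

theorem lt_norm_apply_indicatorCLM_or_compl (hs : MeasurableSet s) (hf : r * ‖f‖ < ‖T f‖) :
    r * ‖Lp.indicatorCLM 𝕜 hs f‖ < ‖T (Lp.indicatorCLM 𝕜 hs f)‖ ∨
      r * ‖Lp.indicatorCLM 𝕜 hs.compl f‖ < ‖T (Lp.indicatorCLM 𝕜 hs.compl f)‖ := by
  by_contra! h
  have hT := norm_add_le (T (Lp.indicatorCLM 𝕜 hs f)) (T (Lp.indicatorCLM 𝕜 hs.compl f))
  rw [← map_add, Lp.indicatorCLM_add_indicatorCLM_compl] at hT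
  rw [← norm_indicatorCLM_add_norm_indicatorCLM_compl (𝕜 := 𝕜) hs f] at hf
  linarith [h.1, h.2]

theorem exists_support_Ioc_half_of_lt_norm_apply (hg : Measurable g)
    (hf_supp : ∀ᵐ x ∂μ, f x ≠ 0 → g x ∈ Ioc c (c + L)) (hf : r * ‖f‖ < ‖T f‖) :
    ∃ (c' : ℝ) (f' : α →₁[μ] E),
      (∀ᵐ x ∂μ, f' x ≠ 0 → g x ∈ Ioc c' (c' + L / 2)) ∧ r * ‖f'‖ < ‖T f'‖ := by
  have hs : MeasurableSet (g ⁻¹' Iic (c + L / 2)) := hg measurableSet_Iic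
  rcases lt_norm_apply_indicatorCLM_or_compl hs hf with h | h
  · refine ⟨c, _, ?_, h⟩
    filter_upwards [Lp.ae_indicatorCLM_ne_zero (𝕜 := 𝕜) hs f, hf_supp] with x hx hfx h0
    obtain ⟨hxs, hx0⟩ := hx h0
    exact ⟨(hfx hx0).1, hxs⟩
  · refine ⟨c + L / 2, _, ?_, h⟩
    filter_upwards [Lp.ae_indicatorCLM_ne_zero (𝕜 := 𝕜) hs.compl f, hf_supp] with x hx hfx h0
    obtain ⟨hxs, hx0⟩ := hx h0
    exact ⟨not_le.1 hxs, by linarith [(hfx hx0).2]⟩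

theorem exists_support_Ioc_div_two_pow_of_lt_norm_apply (hg : Measurable g)
    (hf_supp : ∀ᵐ x ∂μ, f x ≠ 0 → g x ∈ Ioc c (c + L)) (hf : r * ‖f‖ < ‖T f‖) (k : ℕ) :
    ∃ (c' : ℝ) (f' : α →₁[μ] E),
      (∀ᵐ x ∂μ, f' x ≠ 0 → g x ∈ Ioc c' (c' + L / 2 ^ k)) ∧ r * ‖f'‖ < ‖T f'‖ := by
  induction k with
  | zero => exact ⟨c, f, by simpa using hf_supp, hf⟩
  | succ k ih =>
    obtain ⟨c', f', hf'_supp, hf'⟩ := ih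
    rw [pow_succ, ← div_div]
    exact exists_support_Ioc_half_of_lt_norm_apply hg hf'_supp hf'

end MeasureTheory.L1

theorem exists_small_support_of_lt_opNorm {𝕜 E F : Type*} [DenselyNormedField 𝕜]
    [NormedAddCommGroup E] [NormedSpace 𝕜 E] [SeminormedAddCommGroup F] [NormedSpace 𝕜 F]
    (T : (Icc (0:ℝ) 1 →₁[volume] E) →L[𝕜] F) {r : ℝ} (hr₀ : 0 ≤ r) (hr : r < ‖T‖)
    {ε : ℝ≥0∞} (hε : ε ≠ 0) :
    ∃ s, MeasurableSet s ∧ volume s ≤ ε ∧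
      ∃ f : Icc (0:ℝ) 1 →₁[volume] E, (∀ᵐ x, f x ≠ 0 → x ∈ s) ∧ r * ‖f‖ < ‖T f‖ := by
  obtain ⟨f, hf⟩ := T.exists_mul_norm_lt_norm_apply hr₀ hr
  have hf_supp : ∀ᵐ x, f x ≠ 0 → (x : ℝ) ∈ Ioc (-1) (-1 + 2) :=
    ae_of_all _ fun x _ ↦ ⟨by linarith [x.2.1], by linarith [x.2.2]⟩
  obtain ⟨k, hk⟩ := ENNReal.exists_inv_two_pow_lt hε
  obtain ⟨c, f', hf'_supp, hf'⟩ :=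
    L1.exists_support_Ioc_div_two_pow_of_lt_norm_apply measurable_subtype_coe hf_supp hf (k + 1)
  refine ⟨(↑) ⁻¹' Ioc c (c + 2 / 2 ^ (k + 1)), measurable_subtype_coe measurableSet_Ioc, ?_,
    f', hf'_supp, hf'⟩
  have hlen : (2 : ℝ) / 2 ^ (k + 1) = 2⁻¹ ^ k := by
    rw [pow_succ', ← div_div, div_self two_ne_zero, one_div, inv_pow]
  calc volume ((↑) ⁻¹' Ioc c (c + 2 / 2 ^ (k + 1)) : Set (Icc (0:ℝ) 1))
      ≤ volume (Ioc c (c + 2 / 2 ^ (k + 1))) := by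
        rw [volume_preimage_coe measurableSet_Icc.nullMeasurableSet measurableSet_Ioc]
        exact measure_mono inter_subset_left
    _ = 2⁻¹ ^ k := by
        rw [Real.volume_Ioc, add_sub_cancel_left, hlen, ENNReal.ofReal_pow (by norm_num),
          ENNReal.ofReal_inv_of_pos two_pos, ENNReal.ofReal_ofNat]
    _ ≤ ε := hk.le

open MeasureTheory in
theorem bcp_fails_for_operators_on_L1 :
    ¬ HasBCP ((Lp ℝ 1 (volume : Measure (Set.Icc (0:ℝ) 1))) →L[ℝ]
        (Lp ℝ 1 (volume : Measure (Set.Icc (0:ℝ) 1)))) := by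
  rintro ⟨T, r, hr, hcover⟩
  obtain ⟨ε, hε₀, hε⟩ := ENNReal.exists_pos_sum_of_countable' one_ne_zero ℕ
  choose s hs hμs f hf_supp hf using fun n ↦
    exists_small_support_of_lt_opNorm (T n) (hr n).1.le (hr n).2 (hε₀ n).ne'
  set D := (⋃ n, s n)ᶜ
  have hD : MeasurableSet D := (MeasurableSet.iUnion hs).compl
  have hμD : volume D ≠ 0 := by
    rw [prob_compl_eq_one_sub (MeasurableSet.iUnion hs)]
    exact (tsub_pos_of_lt ((measure_iUnion_le s).trans_lt
      ((ENNReal.tsum_le_tsum hμs).trans_lt hε))).ne'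
  obtain ⟨_, ⟨n, rfl⟩, hn⟩ := hcover (mem_sphere_zero_iff_norm.2
    (Lp.opNorm_indicatorCLM (𝕜 := ℝ) hD hμD (measure_ne_top _ _)))
  have hDf : Lp.indicatorCLM ℝ hD (f n) = 0 := Lp.indicatorCLM_eq_zero hD <| by
    filter_upwards [hf_supp n] with x hx hxD
    by_contra h0
    exact hxD (mem_iUnion_of_mem n (hx h0))
  exact (ContinuousLinearMap.lt_opNorm_sub_of_apply_eq_zero hDf (hf n)).not_ge
    (by rwa [← dist_eq_norm, dist_comm])
end

section
/- Let X be a nonzero Banach space. Then: (i) B(X, ℓ_∞) has the ball-covering property if and only if X* has the ball-covering property; (ii) B(X, c_0) has the ball-covering property if and only if X* has the ball-covering property. -/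
open Metric ZeroAtInfty
open scoped ENNReal

/-!
Both `ℓ_∞` and `c_0` carry coordinate functionals `e_k^*` and unit vectors `e_k` with
`‖y‖ = sup_k |e_k^* y|`, so an operator `T : X → Y` has rows `e_k^* ∘ T ∈ X*` and
`‖T‖ = sup_k ‖e_k^* ∘ T‖`. Since a ball `B(c, r)` with `r < ‖c‖` fits inside the open ball
`B(c, ‖c‖)` and those balls grow along the ray through `c`, the ball-covering property amounts to
a countable set of centres `C` such that every `x ≠ 0` satisfies `‖x - c‖ < ‖c‖` for some `c ∈ C`.
If `f ⊗ e_k` lies in the ball of an operator `D`, the `k`-th row of `D` dominates its other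
rows, so `f` lies in the ball of that row. Conversely, if the `k`-th row `f` of `T ≠ 0` lies in
the ball of `d`, then `T` lies in the ball of `(m • d) ⊗ e_k` as soon as `m ‖d‖ > ‖T‖`.
-/

section CountableCover

variable {E : Type*} [NormedAddCommGroup E]

theorem hasBCP_of_countable {ι : Type*} [Countable ι] [Nonempty ι] (c : ι → E) (r : ι → ℝ)
    (hr : ∀ i, 0 < r i ∧ r i < ‖c i‖) (hcov : sphere (0 : E) 1 ⊆ ⋃ i, closedBall (c i) (r i)) :
    HasBCP E := by
  obtain ⟨e, he⟩ := exists_surjective_nat ι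
  exact ⟨c ∘ e, r ∘ e, fun n => hr (e n),
    hcov.trans (he.iUnion_comp fun i => closedBall (c i) (r i)).ge⟩

variable [NormedSpace ℝ E]

theorem norm_smul_sub_smul_lt {x c : E} {a s : ℝ} (h : ‖x - c‖ < ‖c‖) (ha : 0 < a)
    (has : a ≤ s) : ‖a • x - s • c‖ < ‖s • c‖ := by
  have hs : 0 ≤ s := ha.le.trans has
  calc ‖a • x - s • c‖ = ‖a • (x - c) - (s - a) • c‖ := by congr 1; module
    _ ≤ a * ‖x - c‖ + (s - a) * ‖c‖ := by
      grw [norm_sub_le, norm_smul, norm_smul, Real.norm_of_nonneg ha.le,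
        Real.norm_of_nonneg (sub_nonneg.2 has)]
    _ < a * ‖c‖ + (s - a) * ‖c‖ := by gcongr
    _ = ‖s • c‖ := by rw [norm_smul, Real.norm_of_nonneg hs]; ring

theorem hasBCP_iff_countable_cover :
    HasBCP E ↔ Nontrivial E ∧ ∃ C : Set E, C.Countable ∧ ∀ x ≠ 0, ∃ c ∈ C, ‖x - c‖ < ‖c‖ := by
  constructor
  · rintro ⟨c, r, hr, hcov⟩
    refine ⟨nontrivial_of_ne (c 0) 0 (norm_pos_iff.1 ((hr 0).1.trans (hr 0).2)),
      Set.range fun p : ℕ × ℕ => (p.2 : ℝ) • c p.1, Set.countable_range _, fun x hx => ?_⟩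
    have hu : (‖x‖⁻¹ : ℝ) • x ∈ sphere (0 : E) 1 :=
      mem_sphere_zero_iff_norm.2 (norm_smul_inv_norm hx)
    obtain ⟨n, hn⟩ := Set.mem_iUnion.1 (hcov hu)
    have hun : ‖(‖x‖⁻¹ : ℝ) • x - c n‖ < ‖c n‖ :=
      (mem_closedBall_iff_norm.1 hn).trans_lt (hr n).2
    refine ⟨_, Set.mem_range_self (n, ⌈‖x‖⌉₊), ?_⟩
    simpa [smul_inv_smul₀ (norm_ne_zero_iff.2 hx)] using
      norm_smul_sub_smul_lt hun (norm_pos_iff.2 hx) (Nat.le_ceil ‖x‖)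
  · rintro ⟨_, C, hC, hcov⟩
    have := hC.to_subtype
    let ι := {p : C × ℚ // 0 < (p.2 : ℝ) ∧ (p.2 : ℝ) < ‖(p.1 : E)‖}
    have hball : ∀ x ≠ 0, ∃ i : ι, x ∈ closedBall (i.1.1 : E) i.1.2 := fun x hx => by
      obtain ⟨c, hc, hxc⟩ := hcov x hx
      obtain ⟨q, hxq, hqc⟩ := exists_rat_btwn hxc
      exact ⟨⟨(⟨c, hc⟩, q), (norm_nonneg _).trans_lt hxq, hqc⟩,
        mem_closedBall_iff_norm.2 hxq.le⟩
    obtain ⟨x, hx⟩ := (NormedSpace.sphere_nonempty (x := (0 : E)) (r := 1)).2 zero_le_one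
    have : Nonempty ι := ⟨(hball x (ne_zero_of_mem_unit_sphere ⟨x, hx⟩)).choose⟩
    refine hasBCP_of_countable (fun i : ι => (i.1.1 : E)) (fun i => i.1.2) (fun i => i.2) ?_
    exact fun y hy => Set.mem_iUnion.2 (hball y (ne_zero_of_mem_unit_sphere ⟨y, hy⟩))

end CountableCover

structure SupNormCoordinates (ι Y : Type*) [NormedAddCommGroup Y] [NormedSpace ℝ Y] where
  coord : ι → StrongDual ℝ Y
  unitVec : ι → Y
  coord_unitVec_self : ∀ k, coord k (unitVec k) = 1
  coord_unitVec_of_ne : ∀ {j k}, j ≠ k → coord j (unitVec k) = 0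
  norm_coord_le : ∀ k y, ‖coord k y‖ ≤ ‖y‖
  norm_le_of_forall_coord_le : ∀ y {t : ℝ}, 0 ≤ t → (∀ k, ‖coord k y‖ ≤ t) → ‖y‖ ≤ t

namespace SupNormCoordinates

variable {ι Y X : Type*} [NormedAddCommGroup Y] [NormedSpace ℝ Y]
  [NormedAddCommGroup X] [NormedSpace ℝ X]

theorem norm_coord_comp_le (S : SupNormCoordinates ι Y) (k : ι) (T : X →L[ℝ] Y) :
    ‖(S.coord k).comp T‖ ≤ ‖T‖ :=
  ContinuousLinearMap.opNorm_le_bound _ (norm_nonneg T) fun x =>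
    (S.norm_coord_le k (T x)).trans (T.le_opNorm x)

theorem opNorm_le_of_forall_coord_comp_le (S : SupNormCoordinates ι Y) (T : X →L[ℝ] Y)
    {t : ℝ} (ht : 0 ≤ t) (h : ∀ k, ‖(S.coord k).comp T‖ ≤ t) : ‖T‖ ≤ t :=
  ContinuousLinearMap.opNorm_le_bound _ ht fun x =>
    S.norm_le_of_forall_coord_le (T x) (by positivity) fun k =>
      (((S.coord k).comp T).le_opNorm x).trans (by gcongr; exact h k)

theorem exists_coord_comp_ne_zero (S : SupNormCoordinates ι Y) {T : X →L[ℝ] Y} (hT : T ≠ 0) :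
    ∃ k, (S.coord k).comp T ≠ 0 := by
  by_contra! h
  exact hT <| norm_le_zero_iff.1 <|
    S.opNorm_le_of_forall_coord_comp_le T le_rfl fun k => by simp [h k]

theorem coord_comp_smulRight_self (S : SupNormCoordinates ι Y) (f : StrongDual ℝ X) (k : ι) :
    (S.coord k).comp (f.smulRight (S.unitVec k)) = f := by
  ext x
  simp [S.coord_unitVec_self]

theorem coord_comp_smulRight_of_ne (S : SupNormCoordinates ι Y) (f : StrongDual ℝ X)
    {j k : ι} (hjk : j ≠ k) : (S.coord j).comp (f.smulRight (S.unitVec k)) = 0 := by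
  ext x
  simp [S.coord_unitVec_of_ne hjk]

theorem smulRight_unitVec_ne_zero (S : SupNormCoordinates ι Y) {f : StrongDual ℝ X} (k : ι)
    (hf : f ≠ 0) : f.smulRight (S.unitVec k) ≠ 0 := fun h =>
  hf (by rw [← S.coord_comp_smulRight_self f k, h, ContinuousLinearMap.comp_zero])

theorem norm_sub_coord_comp_lt (S : SupNormCoordinates ι Y) {f : StrongDual ℝ X}
    {D : X →L[ℝ] Y} {k : ι} (h : ‖f.smulRight (S.unitVec k) - D‖ < ‖D‖) :
    ‖f - (S.coord k).comp D‖ < ‖(S.coord k).comp D‖ := by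
  have hrow : ‖f - (S.coord k).comp D‖ ≤ ‖f.smulRight (S.unitVec k) - D‖ := by
    simpa [ContinuousLinearMap.comp_sub, S.coord_comp_smulRight_self] using
      S.norm_coord_comp_le k (f.smulRight (S.unitVec k) - D)
  have hD : ‖D‖ ≤ max ‖(S.coord k).comp D‖ ‖f.smulRight (S.unitVec k) - D‖ := by
    refine S.opNorm_le_of_forall_coord_comp_le D (le_max_of_le_left (norm_nonneg _)) fun j => ?_
    rcases eq_or_ne j k with rfl | hjk
    · exact le_max_left _ _
    · refine le_max_of_le_right ?_
      simpa [ContinuousLinearMap.comp_sub, S.coord_comp_smulRight_of_ne f hjk] using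
        S.norm_coord_comp_le j (f.smulRight (S.unitVec k) - D)
  have hDk : ‖D‖ ≤ ‖(S.coord k).comp D‖ :=
    (le_max_iff.1 hD).resolve_right h.not_ge
  exact hrow.trans_lt (h.trans_le hDk)

theorem norm_sub_smulRight_lt (S : SupNormCoordinates ι Y) {T : X →L[ℝ] Y}
    {g : StrongDual ℝ X} {k : ι} (hT : ‖T‖ < ‖g‖) (hg : ‖(S.coord k).comp T - g‖ < ‖g‖) :
    ‖T - g.smulRight (S.unitVec k)‖ < ‖g.smulRight (S.unitVec k)‖ := by
  have hle : ‖T - g.smulRight (S.unitVec k)‖ ≤ max ‖T‖ ‖(S.coord k).comp T - g‖ := by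
    refine S.opNorm_le_of_forall_coord_comp_le _ (le_max_of_le_left (norm_nonneg _)) fun j => ?_
    rw [ContinuousLinearMap.comp_sub]
    rcases eq_or_ne j k with rfl | hjk
    · rw [S.coord_comp_smulRight_self]
      exact le_max_right _ _
    · rw [S.coord_comp_smulRight_of_ne g hjk, sub_zero]
      exact le_max_of_le_left (S.norm_coord_comp_le j T)
  calc ‖T - g.smulRight (S.unitVec k)‖ < ‖g‖ := hle.trans_lt (max_lt hT hg)
    _ = ‖(S.coord k).comp (g.smulRight (S.unitVec k))‖ := by rw [S.coord_comp_smulRight_self]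
    _ ≤ ‖g.smulRight (S.unitVec k)‖ := S.norm_coord_comp_le k _

theorem hasBCP_dual_of_hasBCP (S : SupNormCoordinates ι Y) (h : HasBCP (X →L[ℝ] Y)) :
    HasBCP (StrongDual ℝ X) := by
  obtain ⟨_, C, hC, hcov⟩ := hasBCP_iff_countable_cover.1 h
  obtain ⟨D, hD⟩ := exists_ne (0 : X →L[ℝ] Y)
  obtain ⟨k, hk⟩ := S.exists_coord_comp_ne_zero hD
  refine hasBCP_iff_countable_cover.2
    ⟨nontrivial_of_ne _ 0 hk, (S.coord k).comp '' C, hC.image _, fun f hf => ?_⟩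
  obtain ⟨D, hDC, hfD⟩ := hcov _ (S.smulRight_unitVec_ne_zero k hf)
  exact ⟨_, Set.mem_image_of_mem _ hDC, S.norm_sub_coord_comp_lt hfD⟩

theorem hasBCP_of_hasBCP_dual [Countable ι] [Nonempty ι] (S : SupNormCoordinates ι Y)
    (h : HasBCP (StrongDual ℝ X)) : HasBCP (X →L[ℝ] Y) := by
  obtain ⟨_, C, hC, hcov⟩ := hasBCP_iff_countable_cover.1 h
  have := hC.to_subtype
  obtain ⟨f, hf⟩ := exists_ne (0 : StrongDual ℝ X)
  let center : ι × ℕ × C → X →L[ℝ] Y := fun p =>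
    ((p.2.1 : ℝ) • (p.2.2 : StrongDual ℝ X)).smulRight (S.unitVec p.1)
  refine hasBCP_iff_countable_cover.2
    ⟨nontrivial_of_ne _ 0 (S.smulRight_unitVec_ne_zero (Classical.arbitrary ι) hf),
      Set.range center, Set.countable_range _, fun T hT => ?_⟩
  obtain ⟨k, hk⟩ := S.exists_coord_comp_ne_zero hT
  obtain ⟨d, hdC, hd⟩ := hcov _ hk
  have hd0 : 0 < ‖d‖ := (norm_nonneg _).trans_lt hd
  obtain ⟨m, hm⟩ := exists_nat_gt (max 1 (‖T‖ / ‖d‖))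
  have hm1 : (1 : ℝ) ≤ m := (le_max_left _ _).trans hm.le
  refine ⟨_, Set.mem_range_self (k, m, ⟨d, hdC⟩), S.norm_sub_smulRight_lt ?_ ?_⟩
  · rw [norm_smul, Real.norm_natCast, ← div_lt_iff₀ hd0]
    exact (le_max_right _ _).trans_lt hm
  · simpa using norm_smul_sub_smul_lt hd one_pos hm1

theorem hasBCP_iff_hasBCP_dual [Countable ι] [Nonempty ι] (S : SupNormCoordinates ι Y) :
    HasBCP (X →L[ℝ] Y) ↔ HasBCP (StrongDual ℝ X) :=
  ⟨S.hasBCP_dual_of_hasBCP, S.hasBCP_of_hasBCP_dual⟩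

end SupNormCoordinates

noncomputable def lpInftySupNormCoordinates (α : Type*) [DecidableEq α] :
    SupNormCoordinates α (lp (fun _ : α => ℝ) ⊤) where
  coord := lp.evalCLM ℝ (fun _ => ℝ) ⊤
  unitVec k := lp.single ⊤ k 1
  coord_unitVec_self k := lp.single_apply_self ⊤ k 1
  coord_unitVec_of_ne hjk := lp.single_apply_ne ⊤ _ 1 hjk
  norm_coord_le k y := lp.norm_apply_le_norm ENNReal.top_ne_zero y k
  norm_le_of_forall_coord_le _ _ ht h := lp.norm_le_of_forall_le ht h

noncomputable def zeroAtInftySupNormCoordinates (α : Type*) [TopologicalSpace α]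
    [DiscreteTopology α] [DecidableEq α] : SupNormCoordinates α C₀(α, ℝ) where
  coord k := LinearMap.mkContinuous
    { toFun := fun y => y k, map_add' := fun _ _ => rfl, map_smul' := fun _ _ => rfl }
    1 fun y => by simpa using y.toBCF.norm_coe_le_norm k
  unitVec k :=
    { toFun := Pi.single k 1
      continuous_toFun := continuous_of_discreteTopology
      zero_at_infty' := tendsto_const_nhds.congr' <|
        Filter.eventuallyEq_of_mem isCompact_singleton.compl_mem_cocompact fun j hj =>
          (Pi.single_eq_of_ne (M := fun _ => ℝ) hj 1).symm }
  coord_unitVec_self k := Pi.single_eq_same k 1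
  coord_unitVec_of_ne hjk := Pi.single_eq_of_ne hjk 1
  norm_coord_le k y := y.toBCF.norm_coe_le_norm k
  norm_le_of_forall_coord_le y _ ht h := (BoundedContinuousFunction.norm_le (f := y.toBCF) ht).2 h

theorem bcp_operators_into_linfty_and_c0_iff_dual_general
    (X : Type*) [NormedAddCommGroup X] [NormedSpace ℝ X] :
    (HasBCP (X →L[ℝ] lp (fun _ : ℕ => ℝ) ⊤) ↔ HasBCP (StrongDual ℝ X)) ∧
    (HasBCP (X →L[ℝ] C₀(ℕ, ℝ)) ↔ HasBCP (StrongDual ℝ X)) :=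
  ⟨(lpInftySupNormCoordinates ℕ).hasBCP_iff_hasBCP_dual,
    (zeroAtInftySupNormCoordinates ℕ).hasBCP_iff_hasBCP_dual⟩

theorem bcp_operators_into_linfty_and_c0_iff_dual
    (X : Type*) [NormedAddCommGroup X] [NormedSpace ℝ X] [CompleteSpace X] [Nontrivial X] :
    (HasBCP (X →L[ℝ] lp (fun _ : ℕ => ℝ) ⊤) ↔ HasBCP (StrongDual ℝ X)) ∧
    (HasBCP (X →L[ℝ] C₀(ℕ, ℝ)) ↔ HasBCP (StrongDual ℝ X)) :=
  bcp_operators_into_linfty_and_c0_iff_dual_general X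
end

section
/- Both B(ℓ_1), the space of bounded linear operators on ℓ_1, and B(c_0), the space of bounded linear operators on c_0, have the ball-covering property. -/
open Metric ZeroAtInfty
open scoped ENNReal

/-!
Both operator spaces carry countably many "coordinates" `πₖ` into a separable space that compute the
operator norm: the columns `S eₖ ∈ ℓ¹` of an operator on `ℓ¹`, and the rows `eₖ* ∘ S ∈ c₀*` of an
operator on `c₀`, where `c₀*` is separable because `ℓ¹` maps onto it. If `‖z‖ = 1`, some `πₖ z` has
norm `> 1/2`; approximate it within `1/8` by a point `d` of a countable dense set, so `‖d‖ > 3/8`.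
The operator that is `3d` in coordinate `k` and `0` in the others has norm `3‖d‖`, and its closed
ball of radius `3‖d‖ - 1/8` contains `z`: coordinate `k` of the difference has norm at most
`1/8 + 2‖d‖`, every other coordinate norm at most `1`.
-/

open TopologicalSpace

theorem HasBCP.of_countable_cover {X ι : Type*} [NormedAddCommGroup X] [NormedSpace ℝ X]
    [Nontrivial X] [Countable ι] (c : ι → X) (r : ι → ℝ) (hr : ∀ i, 0 < r i ∧ r i < ‖c i‖)
    (hcover : ∀ x ∈ sphere (0 : X) 1, ∃ i, x ∈ closedBall (c i) (r i)) : HasBCP X := by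
  obtain ⟨x, hx⟩ := (NormedSpace.sphere_nonempty (x := (0 : X))).2 zero_le_one
  have : Nonempty ι := ⟨(hcover x hx).choose⟩
  obtain ⟨f, hf⟩ := exists_surjective_nat ι
  refine ⟨c ∘ f, r ∘ f, fun n => hr (f n), fun x hx => ?_⟩
  obtain ⟨i, hxi⟩ := hcover x hx
  obtain ⟨n, rfl⟩ := hf i
  exact Set.mem_iUnion.2 ⟨n, hxi⟩

theorem HasBCP.of_separable_coordinates {Z F K : Type*} [NormedAddCommGroup Z]
    [NormedSpace ℝ Z] [Nontrivial Z] [NormedAddCommGroup F] [NormedSpace ℝ F] [SeparableSpace F]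
    [Countable K] (π : K → Z →L[ℝ] F) (σ : K → F → Z) (hπ : ∀ k, ‖π k‖ ≤ 1)
    (hnorm : ∀ z r, 0 ≤ r → (∀ k, ‖π k z‖ ≤ r) → ‖z‖ ≤ r)
    (hπσ : ∀ k v, π k (σ k v) = v) (hπσ_ne : ∀ k m v, m ≠ k → π m (σ k v) = 0) :
    HasBCP Z := by
  set d := denseSeq F
  refine HasBCP.of_countable_cover (ι := {p : K × ℕ // 3 / 8 < ‖d p.2‖})
    (fun p => σ p.1.1 ((3 : ℝ) • d p.1.2)) (fun p => 3 * ‖d p.1.2‖ - 1 / 8) ?_ ?_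
  · rintro ⟨⟨k, n⟩, hn⟩
    have : 3 * ‖d n‖ ≤ ‖σ k ((3 : ℝ) • d n)‖ := by
      simpa [hπσ, norm_smul] using (π k).le_of_opNorm_le (hπ k) (σ k ((3 : ℝ) • d n))
    constructor <;> dsimp only <;> linarith
  · intro z hz
    rw [mem_sphere_zero_iff_norm] at hz
    obtain ⟨k, hk⟩ : ∃ k, 1 / 2 < ‖π k z‖ := by
      by_contra! h
      linarith [hnorm z (1 / 2) (by norm_num) h]
    obtain ⟨n, hn⟩ :=
      (denseRange_denseSeq F).exists_dist_lt (π k z) (by norm_num : (0 : ℝ) < 1 / 8)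
    rw [dist_eq_norm] at hn
    have hdn : 3 / 8 < ‖d n‖ := by linarith [norm_sub_norm_le (π k z) (d n)]
    refine ⟨⟨(k, n), hdn⟩, mem_closedBall_iff_norm.2 <| hnorm _ _ (by linarith) fun m => ?_⟩
    rw [map_sub]
    rcases eq_or_ne m k with rfl | hm
    · rw [hπσ, show π m z - (3 : ℝ) • d n = (π m z - d n) - (2 : ℝ) • d n by module]
      refine (norm_sub_le _ _).trans ?_
      rw [norm_smul, Real.norm_two]
      linarith
    · rw [hπσ_ne k m _ hm, sub_zero]
      linarith [(π m).le_of_opNorm_le (hπ m) z]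

namespace lp

variable {α : Type*} {E : α → Type*} [∀ i, NormedAddCommGroup (E i)]

theorem separableSpace [Countable α] [∀ i, SeparableSpace (E i)] {p : ℝ≥0∞} [Fact (1 ≤ p)]
    (hp : p ≠ ⊤) : SeparableSpace (lp E p) := by
  classical
  have hsingles : IsSeparable (⋃ i, Set.range (lp.single p i : E i → lp E p)) :=
    .iUnion fun i => isSeparable_range (isometry_single i).continuous
  rw [← isSeparable_univ_iff]
  refine (hsingles.span (R := ℕ)).closure.mono fun f _ => ?_
  refine mem_closure_of_tendsto (lp.hasSum_single hp f) (Filter.Eventually.of_forall fun s => ?_)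
  exact Submodule.sum_mem _ fun i _ => Submodule.subset_span (Set.mem_iUnion.2 ⟨i, f i, rfl⟩)

theorem norm_eq_tsum_norm_of_one (f : lp E 1) : ‖f‖ = ∑' i, ‖f i‖ := by
  simpa using lp.norm_eq_tsum_rpow (by norm_num : (0 : ℝ) < (1 : ℝ≥0∞).toReal) f

theorem summable_norm_of_one (f : lp E 1) : Summable fun i => ‖f i‖ := by
  simpa using (lp.memℓp f).summable (by norm_num : (0 : ℝ) < (1 : ℝ≥0∞).toReal)

theorem opNorm_le_of_norm_single_le [DecidableEq α] {F : Type*} [NormedAddCommGroup F]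
    [NormedSpace ℝ F]     (S : lp (fun _ : α => ℝ) 1 →L[ℝ] F) {r : ℝ} (hr : 0 ≤ r)
    (h : ∀ i, ‖S (lp.single 1 i 1)‖ ≤ r) : ‖S‖ ≤ r := by
  refine S.opNorm_le_bound hr fun x => ?_
  have hS : HasSum (fun i => x i • S (lp.single 1 i 1)) (S x) := by
    simpa [← map_smul, ← lp.single_smul] using (lp.hasSum_single ENNReal.one_ne_top x).mapL S
  have hle : ∀ i, ‖x i • S (lp.single 1 i 1)‖ ≤ ‖x i‖ * r := fun i => by
    rw [norm_smul]; gcongr; exact h i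
  have hsum : HasSum (fun i => ‖x i‖ * r) (‖x‖ * r) := by
    rw [norm_eq_tsum_norm_of_one]; exact (summable_norm_of_one x).hasSum.mul_right r
  rw [mul_comm]
  exact hS.norm_le_of_bounded hsum hle

end lp

namespace ZeroAtInftyContinuousMap

variable {α : Type*} [TopologicalSpace α]

theorem norm_apply_le (f : C₀(α, ℝ)) (x : α) : ‖f x‖ ≤ ‖f‖ := by
  rw [← norm_toBCF_eq_norm]
  exact f.toBCF.norm_coe_le_norm x

theorem norm_le_iff {f : C₀(α, ℝ)} {C : ℝ} (hC : 0 ≤ C) : ‖f‖ ≤ C ↔ ∀ x, ‖f x‖ ≤ C := by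
  rw [← norm_toBCF_eq_norm]
  exact BoundedContinuousFunction.norm_le hC

noncomputable def evalCLM (x : α) : C₀(α, ℝ) →L[ℝ] ℝ :=
  LinearMap.mkContinuous
    { toFun := fun f => f x
      map_add' := fun _ _ => rfl
      map_smul' := fun _ _ => rfl }
    1 fun f => by simpa using norm_apply_le f x

@[simp]
theorem evalCLM_apply (x : α) (f : C₀(α, ℝ)) : evalCLM x f = f x := rfl

theorem norm_evalCLM_le (x : α) : ‖evalCLM x‖ ≤ 1 :=
  LinearMap.mkContinuous_norm_le _ zero_le_one _

theorem summable_mul_of_lp_one (u : lp (fun _ : α => ℝ) 1) (f : C₀(α, ℝ)) :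
    Summable fun x => u x * f x := by
  refine Summable.of_norm_bounded ((lp.summable_norm_of_one u).mul_right ‖f‖) fun x => ?_
  rw [norm_mul]
  exact mul_le_mul_of_nonneg_left (norm_apply_le f x) (norm_nonneg _)

noncomputable def lpOnePairing : lp (fun _ : α => ℝ) 1 →L[ℝ] C₀(α, ℝ) →L[ℝ] ℝ :=
  LinearMap.mkContinuous₂
    (LinearMap.mk₂ ℝ (fun u f => ∑' x, u x * f x)
      (fun u v f => by
        simp only [lp.coeFn_add, Pi.add_apply, add_mul]
        exact (summable_mul_of_lp_one u f).tsum_add (summable_mul_of_lp_one v f))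
      (fun c u f => by
        simp only [lp.coeFn_smul, Pi.smul_apply, smul_eq_mul, mul_assoc, tsum_mul_left])
      (fun u f g => by
        simp only [coe_add, Pi.add_apply, mul_add]
        exact (summable_mul_of_lp_one u f).tsum_add (summable_mul_of_lp_one u g))
      (fun c u f => by
        simp only [coe_smul, Pi.smul_apply, smul_eq_mul, mul_left_comm, tsum_mul_left]))
    1 fun u f => by
      rw [one_mul, lp.norm_eq_tsum_norm_of_one]
      refine tsum_of_norm_bounded ((lp.summable_norm_of_one u).hasSum.mul_right ‖f‖) fun x => ?_
      rw [norm_mul]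
      exact mul_le_mul_of_nonneg_left (norm_apply_le f x) (norm_nonneg _)

@[simp]
theorem lpOnePairing_apply (u : lp (fun _ : α => ℝ) 1) (f : C₀(α, ℝ)) :
    lpOnePairing u f = ∑' x, u x * f x := rfl

section Discrete

variable [DiscreteTopology α] [DecidableEq α]

noncomputable def single (x : α) (b : ℝ) : C₀(α, ℝ) where
  toFun := Pi.single x b
  continuous_toFun := continuous_of_discreteTopology
  zero_at_infty' := by
    rw [Filter.cocompact_eq_cofinite]
    exact tendsto_const_nhds.congr'
      ((Filter.eventually_cofinite_ne x).mono fun y hy => by simp [hy])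

@[simp]
theorem single_apply (x : α) (b : ℝ) (y : α) :
    single x b y = Pi.single (M := fun _ => ℝ) x b y := rfl

theorem single_eq_smul (x : α) (b : ℝ) : single x b = b • single x 1 := by
  ext y
  simp [Pi.single_apply]

theorem sum_single_apply (s : Finset α) (c : α → ℝ) (y : α) :
    (∑ x ∈ s, single x (c x)) y = if y ∈ s then c y else 0 := by
  rw [← evalCLM_apply, map_sum]
  exact Finset.sum_pi_single y c s

theorem hasSum_single (f : C₀(α, ℝ)) : HasSum (fun x => single x (f x)) f := by
  rw [HasSum, SummationFilter.unconditional_filter, Metric.tendsto_atTop]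
  intro ε hε
  have hsmall : {x | ‖f x‖ < ε / 2}ᶜ.Finite := by
    have := f.zero_at_infty'
    rw [Filter.cocompact_eq_cofinite, tendsto_zero_iff_norm_tendsto_zero] at this
    exact Filter.mem_cofinite.1 (this (Iio_mem_nhds (half_pos hε)))
  refine ⟨hsmall.toFinset, fun s hs => ?_⟩
  rw [dist_eq_norm]
  refine ((norm_le_iff (half_pos hε).le).2 fun y => ?_).trans_lt (half_lt_self hε)
  rw [coe_sub, Pi.sub_apply, sum_single_apply]
  split_ifs with hy
  · simpa using (half_pos hε).le
  · have : y ∉ hsmall.toFinset := fun h => hy (hs h)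
    simp only [Set.Finite.mem_toFinset, Set.mem_compl_iff, not_not] at this
    simpa using this.le

theorem lpOnePairing_surjective :
    Function.Surjective (lpOnePairing : lp (fun _ : α => ℝ) 1 → C₀(α, ℝ) →L[ℝ] ℝ) := by
  intro φ
  set a : α → ℝ := fun x => φ (single x 1)
  have hφ : ∀ x c, φ (single x c) = c * a x := fun x c => by
    rw [single_eq_smul, map_smul, smul_eq_mul]
  have hpartial : ∀ s : Finset α, ∑ x ∈ s, ‖a x‖ ≤ ‖φ‖ := by
    intro s
    set g := ∑ x ∈ s, single x (SignType.sign (a x))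
    have hg : ‖g‖ ≤ 1 := (norm_le_iff zero_le_one).2 fun y => by
      rw [sum_single_apply]
      split_ifs
      · rcases lt_trichotomy (a y) 0 with h | h | h <;> simp [h]
      · simp
    calc ∑ x ∈ s, ‖a x‖ = φ g := by simp [g, map_sum, hφ]
      _ ≤ ‖φ‖ * ‖g‖ := (le_abs_self _).trans (φ.le_opNorm g)
      _ ≤ ‖φ‖ := by simpa using mul_le_mul_of_nonneg_left hg (norm_nonneg φ)
  refine ⟨⟨a, memℓp_gen' (C := ‖φ‖) (by simpa using hpartial)⟩,
    ContinuousLinearMap.ext fun f => ?_⟩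
  have hφf := (hasSum_single f).mapL φ
  simp only [hφ] at hφf
  rw [lpOnePairing_apply, ← hφf.tsum_eq]
  exact tsum_congr fun x => mul_comm _ _

theorem separableSpace_dual [Countable α] : SeparableSpace (C₀(α, ℝ) →L[ℝ] ℝ) :=
  have := lp.separableSpace (E := fun _ : α => ℝ) ENNReal.one_ne_top
  lpOnePairing_surjective.denseRange.separableSpace lpOnePairing.continuous

end Discrete

end ZeroAtInftyContinuousMap

theorem hasBCP_lp_one_continuousLinearMap {α : Type*} [Countable α] [Nonempty α] :
    HasBCP (lp (fun _ : α => ℝ) 1 →L[ℝ] lp (fun _ : α => ℝ) 1) := by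
  classical
  let E := lp (fun _ : α => ℝ) 1
  have : Nontrivial E := by
    obtain ⟨a⟩ := ‹Nonempty α›
    refine nontrivial_of_ne (lp.single 1 a 1) 0 fun h => ?_
    simpa using congrArg (· a) h
  have : SeparableSpace E := lp.separableSpace ENNReal.one_ne_top
  refine HasBCP.of_separable_coordinates (K := α) (F := E)
    (fun i => ContinuousLinearMap.apply ℝ E (lp.single 1 i 1))
    (fun i v => (lp.evalCLM ℝ (fun _ : α => ℝ) 1 i).smulRight v) (fun i => ?_)
    (fun S r hr h => lp.opNorm_le_of_norm_single_le S hr h) (fun i v => ?_) (fun i m v hm => ?_)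
  · refine ContinuousLinearMap.opNorm_le_bound _ zero_le_one fun S => ?_
    simpa [lp.norm_single] using S.le_opNorm (lp.single 1 i 1)
  · simp [lp.evalCLM]
  · simp [lp.evalCLM, hm.symm]

open ZeroAtInftyContinuousMap in
theorem hasBCP_zeroAtInfty_continuousLinearMap {α : Type*} [TopologicalSpace α]
    [DiscreteTopology α] [Countable α] [Nonempty α] :
    HasBCP (C₀(α, ℝ) →L[ℝ] C₀(α, ℝ)) := by
  classical
  have : Nontrivial C₀(α, ℝ) := by
    obtain ⟨a⟩ := ‹Nonempty α›
    refine nontrivial_of_ne (single a 1) 0 fun h => ?_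
    simpa using congrArg (· a) h
  have : SeparableSpace (C₀(α, ℝ) →L[ℝ] ℝ) := separableSpace_dual
  refine HasBCP.of_separable_coordinates (K := α) (F := C₀(α, ℝ) →L[ℝ] ℝ)
    (fun x => ContinuousLinearMap.compL ℝ _ _ ℝ (evalCLM x))
    (fun x φ => φ.smulRight (single x 1)) (fun x => ?_) (fun S r hr h => ?_)
    (fun x φ => ?_) (fun x y φ hyx => ?_)
  · refine ContinuousLinearMap.opNorm_le_bound _ zero_le_one fun S => ?_
    calc ‖evalCLM x ∘L S‖ ≤ ‖evalCLM x‖ * ‖S‖ := ContinuousLinearMap.opNorm_comp_le _ _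
      _ ≤ 1 * ‖S‖ := by gcongr; exact norm_evalCLM_le x
  · refine S.opNorm_le_bound hr fun f => (norm_le_iff (by positivity)).2 fun x => ?_
    calc ‖S f x‖ = ‖(evalCLM x ∘L S) f‖ := rfl
      _ ≤ r * ‖f‖ := ((evalCLM x ∘L S).le_opNorm f).trans (by gcongr; exact h x)
  · ext f
    simp
  · ext f
    simp [hyx]

theorem bcp_operators_on_l1_and_c0 :
    HasBCP ((lp (fun _ : ℕ => ℝ) 1) →L[ℝ] (lp (fun _ : ℕ => ℝ) 1)) ∧
    HasBCP (C₀(ℕ, ℝ) →L[ℝ] C₀(ℕ, ℝ)) :=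
  ⟨hasBCP_lp_one_continuousLinearMap, hasBCP_zeroAtInfty_continuousLinearMap⟩
end
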